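/- arXiv:2307.04302 — 8 statements merged into one kernel-verified Lean document; each statement's English description precedes it below -/
import Mathlib

section
/- For the greedy algorithm with item supply clipping parameter 1/2 (each agent buys min{R_j, B_i/w_{ij}} of the highest-weight item j whose remaining fraction R_j exceeds 1/2, in decreasing weight order), and for any agent subset S ⊆ [n], the payment of each agent i ∈ S when the algorithm is run only on S is at least half her payment when the algorithm is run on all agents: p_i^S ≥ (1/2)·p_i. -/
open Classical in
/-- One step of the greedy algorithm for unit-demand agents with supply clipping 1/2:
when pair `(i,j)` is processed (and `i` belongs to the active set `S`), if agent `i`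
has bought nothing yet and the remaining fraction of item `j` exceeds `1/2`, she buys
`min (remaining) (B i / w i j)` of item `j`. -/
noncomputable def gstep (n m : ℕ) (w : Fin n → Fin m → ℝ) (B : Fin n → ℝ)
    (S : Finset (Fin n)) (x : Fin n → Fin m → ℝ) (pr : Fin n × Fin m) :
    Fin n → Fin m → ℝ :=
  if pr.1 ∈ S ∧ (∀ j', x pr.1 j' = 0) ∧ 1 / 2 < 1 - ∑ i', x i' pr.2 then
    fun i j =>
      if i = pr.1 ∧ j = pr.2 then
        min (1 - ∑ i', x i' pr.2) (B pr.1 / w pr.1 pr.2)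
      else x i j
  else x

/-- The greedy algorithm run on the active agent set `S`, processing the agent-item
pairs in the order given by the list `L` (decreasing weights), starting from the empty
allocation. -/
noncomputable def grun (n m : ℕ) (w : Fin n → Fin m → ℝ) (B : Fin n → ℝ)
    (S : Finset (Fin n)) (L : List (Fin n × Fin m)) : Fin n → Fin m → ℝ :=
  L.foldl (gstep n m w B S) (fun _ _ => 0)

/-!
Couple the run on all agents with the run on `S`, pair by pair. As long as an item is still
open (less than `1/2` sold) in the full run, the run on `S` has sold at most as much of it,
and every agent of `S` who has bought in the full run has also bought in the run on `S`.
So when agent `i ∈ S` buys item `j₀` in the full run, she has already bought some item `j₁`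
in the run on `S`, at a pair processed no later, hence with `w i j₀ ≤ w i j₁`. Because of the
clipping she received at least `min (1/2) (B i / w i j₁)` of it, so she pays at least
`min (w i j₁ / 2) (B i) ≥ min (w i j₀ / 2) (B i)`, while in the full run she pays at most
`min (w i j₀) (B i)`.
-/

open Finset

variable {n m : ℕ} {w : Fin n → Fin m → ℝ} {B : Fin n → ℝ} {S : Finset (Fin n)}

section Step

def GstepFires (S : Finset (Fin n)) (x : Fin n → Fin m → ℝ) (pr : Fin n × Fin m) : Prop :=
  pr.1 ∈ S ∧ (∀ j', x pr.1 j' = 0) ∧ 1 / 2 < 1 - ∑ i', x i' pr.2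

lemma gstep_of_not_fires {x : Fin n → Fin m → ℝ} {pr : Fin n × Fin m}
    (h : ¬GstepFires S x pr) : gstep n m w B S x pr = x := by
  unfold gstep; exact if_neg h

lemma gstep_of_fires {x : Fin n → Fin m → ℝ} {pr : Fin n × Fin m} (h : GstepFires S x pr) :
    gstep n m w B S x pr = fun i j =>
      if i = pr.1 ∧ j = pr.2 then min (1 - ∑ i', x i' pr.2) (B pr.1 / w pr.1 pr.2) else x i j := by
  unfold gstep; exact if_pos h

lemma gstep_apply_of_ne (x : Fin n → Fin m → ℝ) {pr : Fin n × Fin m} {i : Fin n} {j : Fin m}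
    (h : (i, j) ≠ pr) : gstep n m w B S x pr i j = x i j := by
  by_cases hf : GstepFires S x pr
  · rw [gstep_of_fires hf]
    exact if_neg fun hij : i = pr.1 ∧ j = pr.2 => h (Prod.ext hij.1 hij.2)
  · rw [gstep_of_not_fires hf]

lemma gstep_apply_self_of_fires {x : Fin n → Fin m → ℝ} {i : Fin n} {j : Fin m}
    (h : GstepFires S x (i, j)) :
    gstep n m w B S x (i, j) i j = min (1 - ∑ k, x k j) (B i / w i j) := by
  simp [gstep_of_fires h]

lemma gstep_apply_eq_or_fires (x : Fin n → Fin m → ℝ) (pr : Fin n × Fin m) (i : Fin n)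
    (j : Fin m) : gstep n m w B S x pr i j = x i j ∨ (pr = (i, j) ∧ GstepFires S x (i, j)) := by
  by_cases hij : (i, j) = pr
  · subst hij
    by_cases hf : GstepFires S x (i, j)
    · exact Or.inr ⟨rfl, hf⟩
    · exact Or.inl (by rw [gstep_of_not_fires hf])
  · exact Or.inl (gstep_apply_of_ne x hij)

lemma gstep_apply_of_ne_zero {x : Fin n → Fin m → ℝ} (pr : Fin n × Fin m) {i : Fin n}
    {j : Fin m} (h : x i j ≠ 0) : gstep n m w B S x pr i j = x i j := by
  rcases gstep_apply_eq_or_fires (w := w) (B := B) x pr i j with h' | ⟨-, hf⟩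
  · exact h'
  · exact absurd (hf.2.1 j) h

lemma sum_gstep_of_ne (x : Fin n → Fin m → ℝ) {pr : Fin n × Fin m} {j : Fin m}
    (hj : j ≠ pr.2) : ∑ i, gstep n m w B S x pr i j = ∑ i, x i j :=
  sum_congr rfl fun _ _ => gstep_apply_of_ne x fun h => hj (congrArg Prod.snd h)

lemma sum_gstep_of_fires {x : Fin n → Fin m → ℝ} {i : Fin n} {j : Fin m}
    (h : GstepFires S x (i, j)) :
    ∑ k, gstep n m w B S x (i, j) k j = min 1 (∑ k, x k j + B i / w i j) := by
  have hrest : ∑ k ∈ {i}ᶜ, gstep n m w B S x (i, j) k j = ∑ k ∈ {i}ᶜ, x k j :=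
    sum_congr rfl fun _ hk => gstep_apply_of_ne x fun h' => by simp_all
  rw [Fintype.sum_eq_add_sum_compl i, gstep_apply_self_of_fires h, hrest,
    Fintype.sum_eq_add_sum_compl i (fun k => x k j), h.2.1 j, ← min_add_add_right]
  ring_nf

end Step

section Run

lemma grun_append_singleton (l : List (Fin n × Fin m)) (pr : Fin n × Fin m) :
    grun n m w B S (l ++ [pr]) = gstep n m w B S (grun n m w B S l) pr := by
  simp [grun]

lemma grun_induction {P : (Fin n → Fin m → ℝ) → Prop} (h0 : P fun _ _ => 0)
    (hstep : ∀ x pr, P x → P (gstep n m w B S x pr)) (L : List (Fin n × Fin m)) :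
    P (grun n m w B S L) := by
  induction L using List.reverseRecOn with
  | nil => exact h0
  | append_singleton l pr ih => rw [grun_append_singleton]; exact hstep _ _ ih

lemma grun_append_apply_of_ne_zero {l : List (Fin n × Fin m)} {i : Fin n} {j : Fin m}
    (h : grun n m w B S l i j ≠ 0) (t : List (Fin n × Fin m)) :
    grun n m w B S (l ++ t) i j = grun n m w B S l i j := by
  induction t using List.reverseRecOn with
  | nil => simp
  | append_singleton t pr ih =>
    rw [← List.append_assoc, grun_append_singleton, gstep_apply_of_ne_zero pr (ih ▸ h), ih]

lemma mem_of_grun_ne_zero {l : List (Fin n × Fin m)} {i : Fin n} {j : Fin m}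
    (h : grun n m w B S l i j ≠ 0) : (i, j) ∈ l := by
  induction l using List.reverseRecOn with
  | nil => exact absurd rfl h
  | append_singleton l pr ih =>
    rw [grun_append_singleton] at h
    rcases gstep_apply_eq_or_fires (grun n m w B S l) pr i j with h' | ⟨rfl, -⟩
    · exact List.mem_append_left _ (ih (h' ▸ h))
    · exact List.mem_append_right _ (List.mem_singleton_self _)

lemma exists_prefix_of_grun_ne_zero {L : List (Fin n × Fin m)} {i : Fin n} {j : Fin m}
    (h : grun n m w B S L i j ≠ 0) :
    ∃ s t, L = s ++ (i, j) :: t ∧ grun n m w B S (s ++ [(i, j)]) i j ≠ 0 := by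
  induction L using List.reverseRecOn with
  | nil => exact absurd rfl h
  | append_singleton l pr ih =>
    by_cases h0 : grun n m w B S l i j = 0
    · rw [grun_append_singleton] at h
      rcases gstep_apply_eq_or_fires (grun n m w B S l) pr i j with h' | ⟨rfl, -⟩
      · exact absurd (h' ▸ h0) h
      · exact ⟨l, [], rfl, by rwa [grun_append_singleton]⟩
    · obtain ⟨s, t, rfl, hs⟩ := ih h0
      exact ⟨s, t ++ [pr], by simp, hs⟩

end Run

section Invariants

def EntryBounds (w : Fin n → Fin m → ℝ) (B : Fin n → ℝ) (x : Fin n → Fin m → ℝ) : Prop :=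
  ∀ i j, x i j = 0 ∨ (min (1 / 2) (B i / w i j) ≤ x i j ∧ x i j ≤ min 1 (B i / w i j))

def UnitDemand (x : Fin n → Fin m → ℝ) : Prop :=
  ∀ k j j', x k j ≠ 0 → x k j' ≠ 0 → j = j'

variable (hw : ∀ i j, 0 < w i j) (hB : ∀ i, 0 < B i)
include hw hB

lemma EntryBounds.nonneg {x : Fin n → Fin m → ℝ} (hx : EntryBounds w B x) (i : Fin n)
    (j : Fin m) : 0 ≤ x i j :=
  (hx i j).elim (·.ge) fun h => (lt_min one_half_pos (div_pos (hB i) (hw i j))).le.trans h.1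

lemma EntryBounds.gstep {x : Fin n → Fin m → ℝ} (hx : EntryBounds w B x)
    (pr : Fin n × Fin m) : EntryBounds w B (gstep n m w B S x pr) := by
  intro i j
  rcases gstep_apply_eq_or_fires x pr i j with h | ⟨rfl, hf⟩
  · rw [h]; exact hx i j
  · have hsold : 0 ≤ ∑ k, x k j := sum_nonneg fun k _ => hx.nonneg hw hB k j
    have hopen : 1 / 2 < 1 - ∑ k, x k j := hf.2.2
    rw [gstep_apply_self_of_fires hf]
    exact Or.inr ⟨min_le_min_right _ hopen.le, min_le_min_right _ (by linarith)⟩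

lemma entryBounds_grun (L : List (Fin n × Fin m)) : EntryBounds w B (grun n m w B S L) :=
  grun_induction (fun _ _ => Or.inl rfl) (fun _ pr hx => hx.gstep hw hB pr) L

omit hw hB in
lemma UnitDemand.gstep {x : Fin n → Fin m → ℝ} (hx : UnitDemand x) (pr : Fin n × Fin m) :
    UnitDemand (gstep n m w B S x pr) := by
  intro k j j' h h'
  rcases gstep_apply_eq_or_fires x pr k j with e | ⟨hpr, hf⟩ <;>
    rcases gstep_apply_eq_or_fires x pr k j' with e' | ⟨hpr', hf'⟩
  · exact hx k j j' (e ▸ h) (e' ▸ h')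
  · exact absurd (hf'.2.1 j) (e ▸ h)
  · exact absurd (hf.2.1 j') (e' ▸ h')
  · exact (Prod.ext_iff.mp (hpr.symm.trans hpr')).2

omit hw hB in
lemma unitDemand_grun (L : List (Fin n × Fin m)) : UnitDemand (grun n m w B S L) :=
  grun_induction (fun _ _ _ h => absurd rfl h) (fun _ pr hx => hx.gstep pr) L

end Invariants

section Coupling

def Coupled (S : Finset (Fin n)) (xu xs : Fin n → Fin m → ℝ) : Prop :=
  (∀ k ∈ S, (∃ j, xu k j ≠ 0) → ∃ j, xs k j ≠ 0) ∧
  ∀ j, 1 / 2 ≤ ∑ i, xu i j ∨ ∑ i, xs i j ≤ ∑ i, xu i j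

variable {xu xs : Fin n → Fin m → ℝ} (hw : ∀ i j, 0 < w i j) (hB : ∀ i, 0 < B i)
include hw hB

lemma Coupled.gstep_bought (H : Coupled S xu xs) (pr : Fin n × Fin m) (k : Fin n)
    (hk : k ∈ S) (hu : ∃ j, gstep n m w B univ xu pr k j ≠ 0) :
    ∃ j, gstep n m w B S xs pr k j ≠ 0 := by
  by_cases hs : ∃ j, xs k j ≠ 0
  · obtain ⟨j, hj⟩ := hs
    exact ⟨j, by rwa [gstep_apply_of_ne_zero pr hj]⟩
  obtain ⟨j, hj⟩ := hu
  rcases gstep_apply_eq_or_fires xu pr k j with e | ⟨rfl, hfu⟩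
  · exact absurd (H.1 k hk ⟨j, e ▸ hj⟩) hs
  have hopen : 1 / 2 < 1 - ∑ i, xu i j := hfu.2.2
  have hle : ∑ i, xs i j ≤ ∑ i, xu i j := (H.2 j).resolve_left (by linarith)
  have hfs : GstepFires S xs (k, j) :=
    ⟨hk, fun j' => not_not.mp fun h => hs ⟨j', h⟩, show 1 / 2 < 1 - ∑ i, xs i j by linarith⟩
  refine ⟨j, ?_⟩
  rw [gstep_apply_self_of_fires hfs]
  exact (lt_min (by linarith) (div_pos (hB k) (hw k j))).ne'

/-- While item `j` is open in the full run, both runs sell it up to `min 1 (sold + B k / w k j)`,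
which is monotone in what was sold before. -/
lemma Coupled.gstep_sold (H : Coupled S xu xs) (pr : Fin n × Fin m) (j : Fin m) :
    1 / 2 ≤ ∑ i, gstep n m w B univ xu pr i j ∨
      ∑ i, gstep n m w B S xs pr i j ≤ ∑ i, gstep n m w B univ xu pr i j := by
  by_cases hj : j = pr.2
  swap
  · rw [sum_gstep_of_ne _ hj, sum_gstep_of_ne _ hj]; exact H.2 j
  obtain ⟨k, j'⟩ := pr
  obtain rfl : j = j' := hj
  by_cases hfu : GstepFires univ xu (k, j)
  · have hopen : 1 / 2 < 1 - ∑ i, xu i j := hfu.2.2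
    have hle : ∑ i, xs i j ≤ ∑ i, xu i j := (H.2 j).resolve_left (by linarith)
    right
    rw [sum_gstep_of_fires hfu]
    by_cases hfs : GstepFires S xs (k, j)
    · rw [sum_gstep_of_fires hfs]; gcongr
    · rw [gstep_of_not_fires hfs]
      exact le_min (by linarith) (by linarith [div_pos (hB k) (hw k j)])
  · rw [gstep_of_not_fires hfu]
    by_cases hfs : GstepFires S xs (k, j)
    · have hnot : ∀ j', xu k j' = 0 := fun j' => not_not.mp fun h =>
        absurd (H.1 k hfs.1 ⟨j', h⟩) (by simpa using hfs.2.1)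
      left
      by_contra hlt
      exact hfu ⟨mem_univ k, hnot, show 1 / 2 < 1 - ∑ i, xu i j by linarith⟩
    · rw [gstep_of_not_fires hfs]; exact H.2 j

lemma coupled_grun (L : List (Fin n × Fin m)) :
    Coupled S (grun n m w B univ L) (grun n m w B S L) := by
  induction L using List.reverseRecOn with
  | nil => exact ⟨fun _ _ ⟨_, h⟩ => absurd rfl h, fun _ => Or.inr le_rfl⟩
  | append_singleton l pr ih =>
    rw [grun_append_singleton, grun_append_singleton]
    exact ⟨ih.gstep_bought hw hB pr, ih.gstep_sold hw hB pr⟩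

lemma exists_heavier_purchase {L : List (Fin n × Fin m)}
    (hL : L.Pairwise fun p q => w q.1 q.2 ≤ w p.1 p.2) {i : Fin n} (hi : i ∈ S) {j₀ : Fin m}
    (h : grun n m w B univ L i j₀ ≠ 0) : ∃ j₁, w i j₀ ≤ w i j₁ ∧ grun n m w B S L i j₁ ≠ 0 := by
  obtain ⟨s, t, rfl, hbuy⟩ := exists_prefix_of_grun_ne_zero h
  obtain ⟨j₁, hj₁⟩ := (coupled_grun hw hB (s ++ [(i, j₀)])).1 i hi ⟨j₀, hbuy⟩
  refine ⟨j₁, ?_, ?_⟩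
  · rcases List.mem_append.mp (mem_of_grun_ne_zero hj₁) with hmem | hmem
    · exact hL.rel_of_mem_append hmem List.mem_cons_self
    · obtain rfl : j₁ = j₀ := (Prod.ext_iff.mp (List.mem_singleton.mp hmem)).2
      exact le_rfl
  · have hpersist := grun_append_apply_of_ne_zero hj₁ t
    rw [List.append_assoc, List.singleton_append] at hpersist
    rwa [hpersist]

end Coupling

section Payment

variable {x : Fin n → Fin m → ℝ} (hw : ∀ i j, 0 < w i j)
include hw

lemma payment_le_min (hx : EntryBounds w B x) (hu : UnitDemand x) {i : Fin n} {j₀ : Fin m}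
    (h : x i j₀ ≠ 0) : ∑ j, w i j * x i j ≤ min (w i j₀) (B i) := by
  rw [sum_eq_single j₀ (fun j _ hj => by rw [not_imp_comm.mp (hu i j j₀ · h) hj, mul_zero])
    (by simp)]
  calc w i j₀ * x i j₀ ≤ w i j₀ * min 1 (B i / w i j₀) :=
        mul_le_mul_of_nonneg_left ((hx i j₀).resolve_left h).2 (hw i j₀).le
    _ = min (w i j₀) (B i) := by
        rw [mul_min_of_nonneg _ _ (hw i j₀).le, mul_one, mul_div_cancel₀ _ (hw i j₀).ne']

lemma payment_nonneg (hB : ∀ i, 0 < B i) (hx : EntryBounds w B x) (i : Fin n) (j : Fin m) :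
    0 ≤ w i j * x i j :=
  mul_nonneg (hw i j).le (hx.nonneg hw hB i j)

lemma min_le_payment (hB : ∀ i, 0 < B i) (hx : EntryBounds w B x) {i : Fin n} {j₁ : Fin m}
    (h : x i j₁ ≠ 0) : min (w i j₁ / 2) (B i) ≤ ∑ j, w i j * x i j :=
  calc min (w i j₁ / 2) (B i) = w i j₁ * min (1 / 2) (B i / w i j₁) := by
        rw [mul_min_of_nonneg _ _ (hw i j₁).le, mul_div_cancel₀ _ (hw i j₁).ne', mul_one_div]
    _ ≤ w i j₁ * x i j₁ :=
        mul_le_mul_of_nonneg_left ((hx i j₁).resolve_left h).1 (hw i j₁).le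
    _ ≤ ∑ j, w i j * x i j :=
        single_le_sum (fun j _ => payment_nonneg hw hB hx i j) (mem_univ j₁)

end Payment

theorem stmt_3_general (n m : ℕ) (w : Fin n → Fin m → ℝ) (B : Fin n → ℝ)
    (hw : ∀ i j, 0 < w i j) (hB : ∀ i, 0 < B i)
    (L : List (Fin n × Fin m))
    (hL3 : L.Pairwise (fun p q => w q.1 q.2 ≤ w p.1 p.2))
    (S : Finset (Fin n)) :
    ∀ i ∈ S,
      (∑ j, w i j * (grun n m w B Finset.univ L) i j) / 2
        ≤ ∑ j, w i j * (grun n m w B S L) i j := by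
  intro i hi
  have hxs := entryBounds_grun (S := S) hw hB L
  by_cases hnone : ∀ j, grun n m w B univ L i j = 0
  · simp only [hnone, mul_zero, sum_const_zero, zero_div]
    exact sum_nonneg fun j _ => payment_nonneg hw hB hxs i j
  · obtain ⟨j₀, hj₀⟩ := not_forall.mp hnone
    obtain ⟨j₁, hw₀₁, hj₁⟩ := exists_heavier_purchase hw hB hL3 hi hj₀
    have hpay := payment_le_min hw (entryBounds_grun hw hB L) (unitDemand_grun L) hj₀
    calc (∑ j, w i j * grun n m w B univ L i j) / 2 ≤ min (w i j₀) (B i) / 2 := by gcongr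
      _ ≤ min (w i j₁ / 2) (B i) :=
        le_min (by linarith [min_le_left (w i j₀) (B i)])
          (by linarith [min_le_right (w i j₀) (B i), hB i])
      _ ≤ ∑ j, w i j * grun n m w B S L i j := min_le_payment hw hB hxs hj₁

/-- Agent payment monotonicity of the greedy algorithm with supply clipping 1/2:
running the algorithm only on a subset `S` of the agents, every agent `i ∈ S` pays at
least half of what she pays in the run on all agents. -/
theorem stmt_3 (n m : ℕ) (w : Fin n → Fin m → ℝ) (B : Fin n → ℝ)
    (hw : ∀ i j, 0 < w i j) (hB : ∀ i, 0 < B i)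
    (L : List (Fin n × Fin m)) (hL1 : ∀ pr : Fin n × Fin m, pr ∈ L) (hL2 : L.Nodup)
    (hL3 : L.Pairwise (fun p q => w q.1 q.2 ≤ w p.1 p.2))
    (S : Finset (Fin n)) :
    ∀ i ∈ S,
      (∑ j, w i j * (grun n m w B Finset.univ L) i j) / 2
        ≤ ∑ j, w i j * (grun n m w B S L) i j :=
  stmt_3_general n m w B hw hB L hL3 S
end

section
/- For the greedy algorithm with item supply clipping parameter 1/2, and for any agent subset S ⊆ [n], the revenue earned per item when running on S is at most twice the revenue earned per item when running on all agents: for every item j, W_j(x^S) ≤ 2·W_j(x), where W_j(z) denotes the sum of w_{ij} z_{ij} over agents i with z_{ij} > 0. -/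
open Classical in
/-- The revenue attributed to item `j` in allocation `z`: `Σ_{i : z i j > 0} w i j * z i j`. -/
noncomputable def Wj (n m : ℕ) (w : Fin n → Fin m → ℝ) (z : Fin n → Fin m → ℝ)
    (j : Fin m) : ℝ :=
  ∑ i ∈ Finset.univ.filter (fun i => 0 < z i j), w i j * z i j


/-!
Run the greedy algorithm on `S` and on all agents side by side and let `c` be the weight of the
pair being processed; `c` only decreases. For every item `j` the invariant is
`W_j(x^S) + c · (1 - sold_j(x^S)) ≤ 2 · (W_j(x) + c · max 0 (1/2 - sold_j(x)))`.
A purchase at price `c` leaves the left side unchanged and can only increase the right side,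
and lowering `c` preserves it because `max 0 (1/2 - sold_j(x)) ≤ (1 - sold_j(x^S)) / 2`: either
the full run has sold at least as much of `j` as the run on `S`, or already half of it. At the
start both sides equal `c`; at the end `c = 0`.
-/

namespace GreedyMatching

open Finset

variable {n m : ℕ}

def sold (x : Fin n → Fin m → ℝ) (j : Fin m) : ℝ := ∑ i, x i j

def revenue (w x : Fin n → Fin m → ℝ) (j : Fin m) : ℝ := ∑ i, w i j * x i j

def Buys (S : Finset (Fin n)) (x : Fin n → Fin m → ℝ) (i : Fin n) (j : Fin m) : Prop :=
  i ∈ S ∧ x i = 0 ∧ 1 / 2 < 1 - sold x j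

noncomputable def purchase (w : Fin n → Fin m → ℝ) (B : Fin n → ℝ) (x : Fin n → Fin m → ℝ)
    (i : Fin n) (j : Fin m) : ℝ :=
  min (1 - sold x j) (B i / w i j)

def Feasible (x : Fin n → Fin m → ℝ) : Prop := (∀ i j, 0 ≤ x i j) ∧ ∀ j, sold x j ≤ 1

section Step

variable (w : Fin n → Fin m → ℝ) (B : Fin n → ℝ) {S : Finset (Fin n)}
  {x : Fin n → Fin m → ℝ} {i : Fin n} {j : Fin m}

theorem gstep_of_not_buys (h : ¬Buys S x i j) : gstep n m w B S x (i, j) = x := by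
  rw [gstep, if_neg]
  simpa [Buys, sold, funext_iff] using h

theorem gstep_of_buys (h : Buys S x i j) :
    gstep n m w B S x (i, j) = x + Pi.single i (Pi.single j (purchase w B x i j)) := by
  obtain ⟨hiS, hx0, hj⟩ := h
  rw [gstep, if_pos ⟨hiS, congrFun hx0, hj⟩]
  ext i' k
  by_cases hi : i' = i
  · subst hi
    by_cases hk : k = j
    · subst hk; simp [hx0, purchase, sold]
    · simp [hk]
  · simp [hi]

theorem purchase_pos (hw : ∀ i j, 0 < w i j) (hB : ∀ i, 0 < B i) (h : Buys S x i j) :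
    0 < purchase w B x i j :=
  lt_min (by linarith [h.2.2]) (div_pos (hB i) (hw i j))

theorem sold_add_purchase : sold x j + purchase w B x i j = min 1 (sold x j + B i / w i j) := by
  rw [purchase, ← min_add_add_left, add_sub_cancel]

theorem gstep_apply_self_of_buys (h : Buys S x i j) :
    gstep n m w B S x (i, j) i j = purchase w B x i j := by
  simp [gstep_of_buys w B h, h.2.1]

theorem gstep_apply_of_ne (S : Finset (Fin n)) (x : Fin n → Fin m → ℝ) {i' : Fin n}
    (hi : i' ≠ i) : gstep n m w B S x (i, j) i' = x i' := by
  by_cases h : Buys S x i j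
  · simp [gstep_of_buys w B h, hi]
  · rw [gstep_of_not_buys w B h]

theorem sold_gstep_of_ne (S : Finset (Fin n)) (x : Fin n → Fin m → ℝ) {k : Fin m}
    (hk : k ≠ j) :
    sold (gstep n m w B S x (i, j)) k = sold x k := by
  by_cases h : Buys S x i j
  · simp [sold, gstep_of_buys w B h, Pi.single_apply, ite_apply, hk]
  · rw [gstep_of_not_buys w B h]

theorem revenue_gstep_of_ne (S : Finset (Fin n)) (x : Fin n → Fin m → ℝ) {k : Fin m}
    (hk : k ≠ j) : revenue w (gstep n m w B S x (i, j)) k = revenue w x k := by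
  by_cases h : Buys S x i j
  · simp [revenue, gstep_of_buys w B h, Pi.single_apply, ite_apply, hk]
  · rw [gstep_of_not_buys w B h]

theorem sold_gstep_of_buys (h : Buys S x i j) :
    sold (gstep n m w B S x (i, j)) j = sold x j + purchase w B x i j := by
  simp [sold, gstep_of_buys w B h, sum_add_distrib, Pi.single_apply, ite_apply]

theorem revenue_gstep_of_buys (h : Buys S x i j) :
    revenue w (gstep n m w B S x (i, j)) j = revenue w x j + w i j * purchase w B x i j := by
  simp [revenue, gstep_of_buys w B h, mul_add, sum_add_distrib, Pi.single_apply,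
    ite_apply, mul_ite]

theorem sold_le_sold_gstep (hw : ∀ i j, 0 < w i j) (hB : ∀ i, 0 < B i) (S : Finset (Fin n))
    (x : Fin n → Fin m → ℝ) (k : Fin m) : sold x k ≤ sold (gstep n m w B S x (i, j)) k := by
  rcases eq_or_ne k j with rfl | hk
  · by_cases h : Buys S x i k
    · linarith [sold_gstep_of_buys w B h, purchase_pos w B hw hB h]
    · rw [gstep_of_not_buys w B h]
  · rw [sold_gstep_of_ne w B S x hk]

theorem feasible_gstep (hw : ∀ i j, 0 < w i j) (hB : ∀ i, 0 < B i) (hx : Feasible x) :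
    Feasible (gstep n m w B S x (i, j)) := by
  by_cases h : Buys S x i j
  · refine ⟨fun i' k => ?_, fun k => ?_⟩
    · rw [gstep_of_buys w B h, Pi.add_apply, Pi.add_apply]
      have := (purchase_pos w B hw hB h).le
      have := hx.1 i' k
      simp only [Pi.single_apply, ite_apply, Pi.zero_apply]
      split_ifs <;> positivity
    · rcases eq_or_ne k j with rfl | hk
      · have : purchase w B x i k ≤ 1 - sold x k := min_le_left _ _
        linarith [sold_gstep_of_buys w B h]
      · exact (sold_gstep_of_ne w B S x hk).trans_le (hx.2 k)
  · rwa [gstep_of_not_buys w B h]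

theorem revenue_add_mul_unsold_gstep (S : Finset (Fin n)) (x : Fin n → Fin m → ℝ)
    (k : Fin m) :
    revenue w (gstep n m w B S x (i, j)) k + w i j * (1 - sold (gstep n m w B S x (i, j)) k) =
      revenue w x k + w i j * (1 - sold x k) := by
  rcases eq_or_ne k j with rfl | hk
  · by_cases h : Buys S x i k
    · rw [revenue_gstep_of_buys w B h, sold_gstep_of_buys w B h]; ring
    · rw [gstep_of_not_buys w B h]
  · rw [revenue_gstep_of_ne w B S x hk, sold_gstep_of_ne w B S x hk]

theorem max_zero_sub_le_add_max_zero_sub {a s t : ℝ} (ha : 0 ≤ a) :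
    max 0 (t - s) ≤ a + max 0 (t - (s + a)) :=
  max_le (by linarith [le_max_left 0 (t - (s + a))])
    (by linarith [le_max_right 0 (t - (s + a))])

theorem revenue_add_mul_shortfall_le_gstep (hw : ∀ i j, 0 < w i j) (hB : ∀ i, 0 < B i)
    (S : Finset (Fin n)) (x : Fin n → Fin m → ℝ) (k : Fin m) :
    revenue w x k + w i j * max 0 (1 / 2 - sold x k) ≤
      revenue w (gstep n m w B S x (i, j)) k +
        w i j * max 0 (1 / 2 - sold (gstep n m w B S x (i, j)) k) := by
  rcases eq_or_ne k j with rfl | hk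
  · by_cases h : Buys S x i k
    · rw [revenue_gstep_of_buys w B h, sold_gstep_of_buys w B h]
      have := mul_le_mul_of_nonneg_left
        (max_zero_sub_le_add_max_zero_sub (t := 1 / 2) (s := sold x k)
          (purchase_pos w B hw hB h).le) (hw i k).le
      linarith
    · rw [gstep_of_not_buys w B h]
  · rw [revenue_gstep_of_ne w B S x hk, sold_gstep_of_ne w B S x hk]

end Step

/-- `xS` and `xF` are the runs on `S` and on all agents after the same prefix of the order, and
`c` is an upper bound on the weights of the pairs still to be processed. -/
structure CouplingInv (w : Fin n → Fin m → ℝ) (S : Finset (Fin n)) (c : ℝ)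
    (xS xF : Fin n → Fin m → ℝ) : Prop where
  feasible_left : Feasible xS
  feasible_right : Feasible xF
  idle : ∀ i ∈ S, xS i = 0 → xF i = 0
  sold_le : ∀ j, sold xS j ≤ sold xF j ∨ 1 / 2 ≤ sold xF j
  revenue_le : ∀ j, revenue w xS j + c * (1 - sold xS j) ≤
    2 * (revenue w xF j + c * max 0 (1 / 2 - sold xF j))

namespace CouplingInv

variable {w : Fin n → Fin m → ℝ} {S : Finset (Fin n)} {c : ℝ} {xS xF : Fin n → Fin m → ℝ}

theorem zero (w : Fin n → Fin m → ℝ) (S : Finset (Fin n)) (c : ℝ) :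
    CouplingInv w S c 0 0 where
  feasible_left := ⟨fun _ _ => le_rfl, fun _ => by simp [sold]⟩
  feasible_right := ⟨fun _ _ => le_rfl, fun _ => by simp [sold]⟩
  idle _ _ _ := rfl
  sold_le _ := .inl le_rfl
  revenue_le _ := by simp [sold, revenue]; linarith

theorem max_zero_sub_sold_le (h : CouplingInv w S c xS xF) (j : Fin m) :
    max 0 (1 / 2 - sold xF j) ≤ (1 - sold xS j) / 2 := by
  have hF : 0 ≤ sold xF j := sum_nonneg fun i _ => h.feasible_right.1 i j
  have hS := h.feasible_left.2 j
  rcases h.sold_le j with hj | hj <;> exact max_le (by linarith) (by linarith)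

theorem mono (h : CouplingInv w S c xS xF) {c' : ℝ} (hc : c' ≤ c) :
    CouplingInv w S c' xS xF where
  __ := h
  revenue_le j := by
    nlinarith [h.revenue_le j,
      mul_nonneg (sub_nonneg.2 hc) (sub_nonneg.2 (h.max_zero_sub_sold_le j))]

section Step

variable (B : Fin n → ℝ)

theorem idle_gstep (hw : ∀ i j, 0 < w i j) (hB : ∀ i, 0 < B i)
    (h : CouplingInv w S c xS xF) (i : Fin n) (j : Fin m) :
    ∀ i' ∈ S, gstep n m w B S xS (i, j) i' = 0 → gstep n m w B univ xF (i, j) i' = 0 := by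
  intro i' hi' h0
  rcases eq_or_ne i' i with rfl | hi
  · have hS : ¬Buys S xS i' j := fun hS => (purchase_pos w B hw hB hS).ne'
      ((gstep_apply_self_of_buys w B hS).symm.trans (congrFun h0 j))
    rw [gstep_of_not_buys w B hS] at h0
    have hF : ¬Buys univ xF i' j := by
      rintro ⟨-, -, hF⟩
      exact hS ⟨hi', h0, by rcases h.sold_le j with hj | hj <;> linarith⟩
    rw [gstep_of_not_buys w B hF]
    exact h.idle i' hi' h0
  · rw [gstep_apply_of_ne w B S xS hi] at h0
    rw [gstep_apply_of_ne w B univ xF hi]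
    exact h.idle i' hi' h0

theorem sold_le_gstep (hw : ∀ i j, 0 < w i j) (hB : ∀ i, 0 < B i)
    (h : CouplingInv w S c xS xF) (i : Fin n) (j k : Fin m) :
    sold (gstep n m w B S xS (i, j)) k ≤ sold (gstep n m w B univ xF (i, j)) k ∨
      1 / 2 ≤ sold (gstep n m w B univ xF (i, j)) k := by
  rcases eq_or_ne k j with rfl | hk
  swap
  · rw [sold_gstep_of_ne w B S xS hk, sold_gstep_of_ne w B univ xF hk]
    exact h.sold_le k
  by_cases hS : Buys S xS i k
  · by_cases hF : Buys univ xF i k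
    · have hle : sold xS k ≤ sold xF k := (h.sold_le k).resolve_right (by linarith [hF.2.2])
      left
      rw [sold_gstep_of_buys w B hS, sold_gstep_of_buys w B hF, sold_add_purchase,
        sold_add_purchase]
      exact min_le_min_left _ (by linarith)
    · -- agent `i` is still free in the full run, so only a half-sold item can stop her
      right
      rw [gstep_of_not_buys w B hF]
      by_contra hlt
      exact hF ⟨mem_univ i, h.idle i hS.1 hS.2.1, by linarith⟩
  · rw [gstep_of_not_buys w B hS]
    have := sold_le_sold_gstep w B hw hB univ xF (i := i) (j := k) k
    exact (h.sold_le k).imp (fun hk => hk.trans this) (fun hk => hk.trans this)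

theorem step (hw : ∀ i j, 0 < w i j) (hB : ∀ i, 0 < B i) {i : Fin n} {j : Fin m}
    (h : CouplingInv w S (w i j) xS xF) :
    CouplingInv w S (w i j) (gstep n m w B S xS (i, j)) (gstep n m w B univ xF (i, j)) where
  feasible_left := feasible_gstep w B hw hB h.feasible_left
  feasible_right := feasible_gstep w B hw hB h.feasible_right
  idle := h.idle_gstep B hw hB i j
  sold_le := h.sold_le_gstep B hw hB i j
  revenue_le k := by
    rw [revenue_add_mul_unsold_gstep]
    linarith [h.revenue_le k,
      revenue_add_mul_shortfall_le_gstep w B hw hB univ xF (i := i) (j := j) k]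

theorem foldl (hw : ∀ i j, 0 < w i j) (hB : ∀ i, 0 < B i) {L : List (Fin n × Fin m)}
    (hL : L.Pairwise fun p q => w q.1 q.2 ≤ w p.1 p.2)
    (hLc : ∀ p ∈ L, w p.1 p.2 ≤ c) (hc : 0 ≤ c) (h : CouplingInv w S c xS xF) :
    CouplingInv w S 0 (L.foldl (gstep n m w B S) xS) (L.foldl (gstep n m w B univ) xF) := by
  induction L generalizing c xS xF with
  | nil => exact h.mono hc
  | cons p L ih =>
    rw [List.pairwise_cons] at hL
    exact ih hL.2 hL.1 (hw p.1 p.2).le ((h.mono (hLc p List.mem_cons_self)).step B hw hB)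

end Step

end CouplingInv

theorem Wj_eq_revenue (w : Fin n → Fin m → ℝ) {z : Fin n → Fin m → ℝ} (hz : ∀ i j, 0 ≤ z i j)
    (j : Fin m) : Wj n m w z j = revenue w z j := by
  classical
  rw [Wj, sum_filter, revenue]
  refine sum_congr rfl fun i _ => ?_
  rcases (hz i j).lt_or_eq with hpos | hzero
  · rw [if_pos hpos]
  · simp [← hzero]

end GreedyMatching

open GreedyMatching in
theorem stmt_4_general (n m : ℕ) (w : Fin n → Fin m → ℝ) (B : Fin n → ℝ)
    (hw : ∀ i j, 0 < w i j) (hB : ∀ i, 0 < B i)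
    (L : List (Fin n × Fin m))
    (hL3 : L.Pairwise (fun p q => w q.1 q.2 ≤ w p.1 p.2))
    (S : Finset (Fin n)) :
    ∀ j, Wj n m w (grun n m w B S L) j ≤ 2 * Wj n m w (grun n m w B Finset.univ L) j := by
  intro j
  obtain ⟨c, hc⟩ := Finite.exists_le fun p : Fin n × Fin m => w p.1 p.2
  have h : CouplingInv w S 0 (grun n m w B S L) (grun n m w B Finset.univ L) :=
    (CouplingInv.zero w S (max c 0)).foldl B hw hB hL3
      (fun p _ => (hc p).trans (le_max_left _ _)) (le_max_right _ _)
  rw [Wj_eq_revenue w h.feasible_left.1, Wj_eq_revenue w h.feasible_right.1]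
  simpa using h.revenue_le j

/-- Selling revenue monotonicity of the greedy algorithm with supply clipping 1/2: for
any agent subset `S` and every item `j`, the revenue of item `j` in the run on `S` is
at most twice its revenue in the run on all agents. -/
theorem stmt_4 (n m : ℕ) (w : Fin n → Fin m → ℝ) (B : Fin n → ℝ)
    (hw : ∀ i j, 0 < w i j) (hB : ∀ i, 0 < B i)
    (L : List (Fin n × Fin m)) (hL1 : ∀ pr : Fin n × Fin m, pr ∈ L) (hL2 : L.Nodup)
    (hL3 : L.Pairwise (fun p q => w q.1 q.2 ≤ w p.1 p.2))
    (S : Finset (Fin n)) :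
    ∀ j, Wj n m w (grun n m w B S L) j ≤ 2 * Wj n m w (grun n m w B Finset.univ L) j :=
  stmt_4_general n m w B hw hB L hL3 S
end

section
/- In the single divisible item setting, suppose a reserve-price procedure sets r = (1/4)·P_S where P_S = Σ_{i∈S} p*_i and sells fractions sequentially to agents in R = [n]\S, where each agent i with v_i/τ_i ≥ r buys min{B_i/r, α} of the remaining fraction α at price r per unit. If P_S ∈ [OPT/3, 2·OPT/3] and P_S ≤ OPT, then the total revenue collected is at least OPT/12. -/
/-! At reserve price `r` the sequential sale collects exactly `min (r, Q)`, where `Q` is the total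
budget of the agents of `R` whose value-to-target ratio reaches `r`: either the item sells out at
`r` per unit or every such agent spends its whole budget. With `r = P_S / 4 ≥ OPT / 12` it remains
to bound `Q`. An agent `i ∉ S` either qualifies, and then `p*_i ≤ B_i`, or its ratio is below `r`,
and then `p*_i ≤ r x*_i`; summing, `Q ≥ (OPT - P_S) - r ≥ OPT / 3 - OPT / 6`. -/

open Classical in
/-- Sequential selling of a divisible item at per-unit reserve price `r`: agents arrive
in the order of the list; an arriving agent `i` with `v i / τ i ≥ r` buys
`min (B i / r) (remaining fraction)`. Returns the total revenue collected, given the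
currently remaining fraction. -/
noncomputable def sellRev (n : ℕ) (v B τ : Fin n → ℝ) (r : ℝ) :
    List (Fin n) → ℝ → ℝ
  | [], _ => 0
  | i :: rest, α =>
    let y := if r ≤ v i / τ i then min (B i / r) α else 0
    y * r + sellRev n v B τ r rest (α - y)

open Finset

open Classical in
noncomputable def qualifiedBudget {ι : Type*} (v B τ : ι → ℝ) (r : ℝ) (i : ι) : ℝ :=
  if r ≤ v i / τ i then B i else 0

lemma qualifiedBudget_nonneg {ι : Type*} {v B τ : ι → ℝ} {r : ℝ} (hB : ∀ i, 0 ≤ B i) (i : ι) :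
    0 ≤ qualifiedBudget v B τ r i := by
  unfold qualifiedBudget
  split_ifs
  exacts [hB i, le_rfl]

lemma min_div_mul_eq {b r α : ℝ} (hb : 0 ≤ b) (hr : 0 ≤ r) :
    min (b / r) α * r = min b (r * α) := by
  rcases hr.eq_or_lt with rfl | hr
  · simp [hb]
  · rw [min_mul_of_nonneg _ _ hr.le, div_mul_cancel₀ _ hr.ne', mul_comm]

lemma min_add_min_sub_min {b c t : ℝ} (ht : 0 ≤ t) :
    min b c + min (c - min b c) t = min c (b + t) := by
  rcases le_total b c with h | h
  · rw [min_eq_left h, ← min_add_add_left, add_sub_cancel]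
  · rw [min_eq_right h, sub_self, min_eq_left ht, add_zero, min_eq_left (by linarith)]

lemma sellRev_eq_min {n : ℕ} {v B τ : Fin n → ℝ} {r : ℝ} (hr : 0 ≤ r) (hB : ∀ i, 0 ≤ B i)
    (L : List (Fin n)) {α : ℝ} (hα : 0 ≤ α) :
    sellRev n v B τ r L α = min (r * α) (L.map (qualifiedBudget v B τ r)).sum := by
  induction L generalizing α with
  | nil => simp [sellRev, mul_nonneg hr hα]
  | cons i L ih =>
    have hQ : 0 ≤ (L.map (qualifiedBudget v B τ r)).sum :=
      List.sum_nonneg (by simpa using fun j _ => qualifiedBudget_nonneg hB j)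
    simp only [sellRev, List.map_cons, List.sum_cons, qualifiedBudget]
    split_ifs
    · have hsold : min (B i / r) α * r = min (B i) (r * α) := min_div_mul_eq (hB i) hr
      rw [ih (sub_nonneg.2 (min_le_right _ _)), hsold, mul_sub, mul_comm r (min _ _), hsold,
        min_add_min_sub_min hQ]
    · rw [zero_mul, zero_add, sub_zero, zero_add, ih hα]

lemma sum_le_sum_qualifiedBudget_add {ι : Type*} {v B τ x p : ι → ℝ} {r : ℝ} (hr : 0 ≤ r)
    (hp : ∀ i, p i = x i * (v i / τ i)) (hpB : ∀ i, p i ≤ B i) (hx : ∀ i, 0 ≤ x i)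
    (T : Finset ι) :
    ∑ i ∈ T, p i ≤ ∑ i ∈ T, qualifiedBudget v B τ r i + r * ∑ i ∈ T, x i := by
  rw [mul_sum, ← sum_add_distrib]
  refine sum_le_sum fun i _ => ?_
  unfold qualifiedBudget
  split_ifs with hq
  · linarith [hpB i, mul_nonneg hr (hx i)]
  · rw [hp i, zero_add, mul_comm r]
    exact mul_le_mul_of_nonneg_left (not_le.1 hq).le (hx i)

theorem stmt_8_general (n : ℕ) (v B τ : Fin n → ℝ)
    (hv : ∀ i, 0 ≤ v i) (hB : ∀ i, 0 < B i) (hτ : ∀ i, 0 < τ i)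
    (S : Finset (Fin n)) (R : List (Fin n))
    (hRnd : R.Nodup) (hR : ∀ i, i ∈ R ↔ i ∉ S)
    (xstar pstar : Fin n → ℝ)
    (hps : ∀ i, pstar i = xstar i * (v i / τ i))
    (hpB : ∀ i, pstar i ≤ B i)
    (hx0 : ∀ i, 0 ≤ xstar i) (hx1 : ∑ i, xstar i ≤ 1)
    (hPS1 : (∑ i, pstar i) / 3 ≤ ∑ i ∈ S, pstar i)
    (hPS2 : ∑ i ∈ S, pstar i ≤ 2 * (∑ i, pstar i) / 3) :
    (∑ i, pstar i) / 12 ≤ sellRev n v B τ ((∑ i ∈ S, pstar i) / 4) R 1 := by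
  set r := (∑ i ∈ S, pstar i) / 4 with hr_def
  have hr : 0 ≤ r := by
    refine div_nonneg (sum_nonneg fun i _ => ?_) zero_le_four
    rw [hps i]
    exact mul_nonneg (hx0 i) (div_nonneg (hv i) (hτ i).le)
  have hRS : R.toFinset = Sᶜ := by ext i; simp [hR i]
  have hsplit : ∑ i ∈ Sᶜ, pstar i + ∑ i ∈ S, pstar i = ∑ i, pstar i := sum_compl_add_sum S pstar
  have hxS : ∑ i ∈ Sᶜ, xstar i ≤ 1 :=
    (sum_le_sum_of_subset_of_nonneg (subset_univ _) fun i _ _ => hx0 i).trans hx1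
  have hbudget := sum_le_sum_qualifiedBudget_add hr hps hpB hx0 Sᶜ
  rw [sellRev_eq_min hr (fun i => (hB i).le) R zero_le_one, mul_one, ← List.sum_toFinset _ hRnd,
    hRS]
  refine le_min (by linarith) ?_
  have hxr : r * ∑ i ∈ Sᶜ, xstar i ≤ r := mul_le_of_le_one_right hr hxS
  linarith

/-- Random-sampling procedure for one divisible item: with reserve price
`r = P_S / 4` where `P_S = Σ_{i∈S} p*_i` is the optimal-solution revenue of the sampled
agents, if `P_S ∈ [OPT/3, 2·OPT/3]` (and `P_S ≤ OPT`), selling sequentially to the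
remaining agents `R` collects revenue at least `OPT/12`. -/
theorem stmt_8 (n : ℕ) (v B τ : Fin n → ℝ)
    (hv : ∀ i, 0 ≤ v i) (hB : ∀ i, 0 < B i) (hτ : ∀ i, 0 < τ i)
    (S : Finset (Fin n)) (R : List (Fin n))
    (hRnd : R.Nodup) (hR : ∀ i, i ∈ R ↔ i ∉ S)
    (xstar pstar : Fin n → ℝ)
    (hps : ∀ i, pstar i = xstar i * (v i / τ i))
    (hpB : ∀ i, pstar i ≤ B i)
    (hx0 : ∀ i, 0 ≤ xstar i) (hx1 : ∑ i, xstar i ≤ 1)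
    (hPS1 : (∑ i, pstar i) / 3 ≤ ∑ i ∈ S, pstar i)
    (hPS2 : ∑ i ∈ S, pstar i ≤ 2 * (∑ i, pstar i) / 3)
    (hPS3 : ∑ i ∈ S, pstar i ≤ ∑ i, pstar i) :
    (∑ i, pstar i) / 12 ≤ sellRev n v B τ ((∑ i ∈ S, pstar i) / 4) R 1 :=
  stmt_8_general n v B τ hv hB hτ S R hRnd hR xstar pstar hps hpB hx0 hx1 hPS1 hPS2
end

section
/- The mechanism that runs the indivisible first-price procedure with probability 9/13 (revenue max_k min{B_k, v_k/τ_k}) and the random-sampling reserve-price procedure with probability 4/13 achieves expected revenue at least OPT/52 for the single divisible item auction, where OPT is the optimal offline revenue. -/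
/-- The optimal offline revenue of selling one divisible unit-supply item to the agents
in `A`: the supremum of `Σ p i` over allocations `x` and payments `p` supported on `A`
with `Σ x ≤ 1`, `p i ≤ B i` and `p i * τ i ≤ x i * v i`. -/
noncomputable def optRev (n : ℕ) (v B τ : Fin n → ℝ) (A : Finset (Fin n)) : ℝ :=
  sSup {t : ℝ | ∃ x p : Fin n → ℝ,
    (∀ i, 0 ≤ x i) ∧ (∀ i ∉ A, x i = 0 ∧ p i = 0) ∧ (∑ i, x i) ≤ 1 ∧
    (∀ i, p i ≤ B i) ∧ (∀ i, p i * τ i ≤ x i * v i) ∧ t = ∑ i, p i}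

open Finset

section SequentialSale

variable {n : ℕ} {v B τ : Fin n → ℝ} {r : ℝ}

lemma sellRev_nonneg (hr : 0 ≤ r) (hB : ∀ i, 0 ≤ B i) :
    ∀ (L : List (Fin n)) {α : ℝ}, 0 ≤ α → 0 ≤ sellRev n v B τ r L α
  | [], _, _ => le_rfl
  | i :: L, α, hα => by
    rw [sellRev]
    split_ifs with hi
    · exact add_nonneg (mul_nonneg (le_min (div_nonneg (hB i) hr) hα) hr)
        (sellRev_nonneg hr hB L (sub_nonneg.2 (min_le_right _ _)))
    · simpa using sellRev_nonneg hr hB L hα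

lemma min_le_sellRev (hr : 0 < r) (hB : ∀ i, 0 ≤ B i) :
    ∀ (L : List (Fin n)) {α : ℝ}, 0 ≤ α →
      min (r * α) (L.map fun i => if r ≤ v i / τ i then B i else 0).sum
        ≤ sellRev n v B τ r L α
  | [], α, _ => by simp [sellRev]
  | i :: L, α, hα => by
    set budget := (L.map fun i => if r ≤ v i / τ i then B i else 0).sum
    rw [sellRev, List.map_cons, List.sum_cons]
    split_ifs with hi
    · rcases le_total (B i / r) α with hle | hlt
      · have hsell := min_le_sellRev hr hB L (sub_nonneg.2 hle)
        rw [min_eq_left hle, div_mul_cancel₀ _ hr.ne']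
        calc min (r * α) (B i + budget) = B i + min (r * (α - B i / r)) budget := by
              rw [← min_add_add_left, mul_sub, mul_div_cancel₀ _ hr.ne', add_sub_cancel]
          _ ≤ _ := by gcongr
      · rw [min_eq_right hlt, sub_self, mul_comm]
        exact (min_le_left _ _).trans
          (le_add_of_nonneg_right (sellRev_nonneg hr.le hB L le_rfl))
    · simpa using min_le_sellRev hr hB L hα

lemma min_le_sellRev_sort (hr : 0 < r) (hB : ∀ i, 0 ≤ B i) (A : Finset (Fin n)) :
    min r (∑ i ∈ A with r ≤ v i / τ i, B i) ≤ sellRev n v B τ r (A.sort (· ≤ ·)) 1 := by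
  have h := min_le_sellRev (v := v) (τ := τ) hr hB (A.sort (· ≤ ·)) zero_le_one
  rwa [mul_one, ((A.sort_perm_toList _).map _).sum_eq, Finset.sum_map_toList,
    ← Finset.sum_filter] at h

end SequentialSale

section OfflineOptimum

variable {n : ℕ} {v B τ : Fin n → ℝ} {A : Finset (Fin n)} {x p : Fin n → ℝ}

structure IsFeasible (v B τ : Fin n → ℝ) (A : Finset (Fin n)) (x p : Fin n → ℝ) : Prop where
  alloc_nonneg : ∀ i, 0 ≤ x i
  eq_zero_of_notMem : ∀ i ∉ A, x i = 0 ∧ p i = 0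
  sum_alloc_le_one : ∑ i, x i ≤ 1
  le_budget : ∀ i, p i ≤ B i
  mul_le_value : ∀ i, p i * τ i ≤ x i * v i

lemma isFeasible_zero (hB : ∀ i, 0 ≤ B i) : IsFeasible v B τ A 0 0 :=
  ⟨fun _ => le_rfl, fun _ _ => ⟨rfl, rfl⟩, by simp, hB, fun _ => by simp⟩

namespace IsFeasible

lemma mono {A' : Finset (Fin n)} (h : IsFeasible v B τ A x p) (hA : A ⊆ A') :
    IsFeasible v B τ A' x p :=
  { h with eq_zero_of_notMem := fun i hi => h.eq_zero_of_notMem i fun hiA => hi (hA hiA) }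

lemma restrict (hB : ∀ i, 0 ≤ B i) (h : IsFeasible v B τ A x p) (S : Finset (Fin n)) :
    IsFeasible v B τ S (fun i => if i ∈ S then x i else 0) (fun i => if i ∈ S then p i else 0) where
  alloc_nonneg i := by split_ifs <;> simp [h.alloc_nonneg i]
  eq_zero_of_notMem i hi := by simp [hi]
  sum_alloc_le_one := (sum_le_sum fun i _ => by split_ifs <;> simp [h.alloc_nonneg i]).trans
    h.sum_alloc_le_one
  le_budget i := by split_ifs; exacts [h.le_budget i, hB i]
  mul_le_value i := by split_ifs; exacts [h.mul_le_value i, by simp]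

lemma posPart (hv : ∀ i, 0 ≤ v i) (hB : ∀ i, 0 ≤ B i) (h : IsFeasible v B τ A x p) :
    IsFeasible v B τ A x fun i => max (p i) 0 where
  alloc_nonneg := h.alloc_nonneg
  eq_zero_of_notMem i hi := by simp [h.eq_zero_of_notMem i hi]
  sum_alloc_le_one := h.sum_alloc_le_one
  le_budget i := max_le (h.le_budget i) (hB i)
  mul_le_value i := by
    rcases le_total (p i) 0 with hp | hp
    · simpa [max_eq_right hp] using mul_nonneg (h.alloc_nonneg i) (hv i)
    · simpa [max_eq_left hp] using h.mul_le_value i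

lemma alloc_le_one (h : IsFeasible v B τ A x p) (i : Fin n) : x i ≤ 1 :=
  (single_le_sum (fun j _ => h.alloc_nonneg j) (mem_univ i)).trans h.sum_alloc_le_one

lemma le_min_budget (hv : ∀ i, 0 ≤ v i) (hτ : ∀ i, 0 < τ i) (h : IsFeasible v B τ A x p)
    (i : Fin n) :
    p i ≤ min (B i) (v i / τ i) := by
  refine le_min (h.le_budget i) ((le_div_iff₀ (hτ i)).2 ?_)
  calc p i * τ i ≤ x i * v i := h.mul_le_value i
    _ ≤ 1 * v i := by gcongr; exacts [hv i, h.alloc_le_one i]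
    _ = v i := one_mul _

lemma le_ite_add_mul (hτ : ∀ i, 0 < τ i) (h : IsFeasible v B τ A x p) {r : ℝ} (hr : 0 ≤ r)
    (i : Fin n) : p i ≤ (if r ≤ v i / τ i then B i else 0) + x i * r := by
  split_ifs with hi
  · linarith [h.le_budget i, mul_nonneg (h.alloc_nonneg i) hr]
  · calc p i ≤ x i * (v i / τ i) := by
          rw [← mul_div_assoc, le_div_iff₀ (hτ i)]; exact h.mul_le_value i
      _ ≤ 0 + x i * r := by rw [zero_add]; gcongr; exacts [h.alloc_nonneg i, (not_le.1 hi).le]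

lemma sum_le_optRev (h : IsFeasible v B τ A x p) : ∑ i, p i ≤ optRev n v B τ A :=
  le_csSup ⟨∑ i, B i, by rintro t ⟨x, p, -, -, -, hpB, -, rfl⟩; exact sum_le_sum fun i _ => hpB i⟩
    ⟨x, p, h.1, h.2, h.3, h.4, h.5, rfl⟩

lemma sum_le_optRev_restrict (hB : ∀ i, 0 ≤ B i) (h : IsFeasible v B τ A x p)
    (S : Finset (Fin n)) : ∑ i ∈ S, p i ≤ optRev n v B τ S := by
  simpa [sum_ite_mem] using (h.restrict hB S).sum_le_optRev

end IsFeasible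

lemma optRev_nonneg (hB : ∀ i, 0 ≤ B i) (A : Finset (Fin n)) : 0 ≤ optRev n v B τ A := by
  simpa using (isFeasible_zero (v := v) (τ := τ) (A := A) hB).sum_le_optRev

lemma isCompact_setOf_isFeasible_nonneg :
    IsCompact {q : (Fin n → ℝ) × (Fin n → ℝ) | IsFeasible v B τ A q.1 q.2 ∧ ∀ i, 0 ≤ q.2 i} := by
  have hbox : IsCompact ((Set.univ.pi fun _ => Set.Icc 0 1) ×ˢ
      (Set.univ.pi fun i => Set.Icc 0 (B i)) : Set ((Fin n → ℝ) × (Fin n → ℝ))) :=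
    (isCompact_univ_pi fun _ => isCompact_Icc).prod (isCompact_univ_pi fun _ => isCompact_Icc)
  refine hbox.of_isClosed_subset ?_ fun q ⟨hf, hp⟩ =>
    ⟨fun i _ => ⟨hf.alloc_nonneg i, hf.alloc_le_one i⟩, fun i _ => ⟨hp i, hf.le_budget i⟩⟩
  have hset : {q : (Fin n → ℝ) × (Fin n → ℝ) | IsFeasible v B τ A q.1 q.2 ∧ ∀ i, 0 ≤ q.2 i} =
      {q | ∑ i, q.1 i ≤ 1} ∩ ⋂ i, {q | 0 ≤ q.1 i ∧ (i ∉ A → q.1 i = 0 ∧ q.2 i = 0) ∧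
        q.2 i ≤ B i ∧ q.2 i * τ i ≤ q.1 i * v i ∧ 0 ≤ q.2 i} := by
    ext q
    simp only [Set.mem_ofPred_eq, Set.mem_inter_iff, Set.mem_iInter]
    exact ⟨fun ⟨hf, hp⟩ => ⟨hf.3, fun i => ⟨hf.1 i, hf.2 i, hf.4 i, hf.5 i, hp i⟩⟩,
      fun ⟨h1, h⟩ => ⟨⟨fun i => (h i).1, fun i => (h i).2.1, h1, fun i => (h i).2.2.1,
        fun i => (h i).2.2.2.1⟩, fun i => (h i).2.2.2.2⟩⟩
  rw [hset]
  refine (isClosed_le (by fun_prop) (by fun_prop)).inter (isClosed_iInter fun i => ?_)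
  by_cases hi : i ∈ A <;>
    simp only [hi, not_true_eq_false, not_false_eq_true, false_imp_iff, true_imp_iff, true_and,
      Set.ofPred_and] <;>
    repeat' apply IsClosed.inter
  all_goals first
    | exact isClosed_le (by fun_prop) (by fun_prop)
    | exact isClosed_eq (by fun_prop) (by fun_prop)

lemma exists_isFeasible_sum_eq_optRev (hv : ∀ i, 0 ≤ v i) (hB : ∀ i, 0 ≤ B i)
    (A : Finset (Fin n)) :
    ∃ x p, IsFeasible v B τ A x p ∧ (∀ i, 0 ≤ p i) ∧ ∑ i, p i = optRev n v B τ A := by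
  have h0 : IsFeasible v B τ A 0 0 := isFeasible_zero hB
  obtain ⟨⟨x, p⟩, ⟨hf, hp⟩, hmax⟩ := isCompact_setOf_isFeasible_nonneg.exists_isMaxOn
    ⟨0, h0, fun _ => le_rfl⟩ (f := fun q => ∑ i, q.2 i) (by fun_prop)
  refine ⟨x, p, hf, hp, hf.sum_le_optRev.antisymm
    (csSup_le ⟨_, 0, 0, h0.1, h0.2, h0.3, h0.4, h0.5, rfl⟩ ?_)⟩
  rintro t ⟨x', p', h0, hA, h1, hpB, hpτ, rfl⟩
  have hf' : IsFeasible v B τ A x' p' := ⟨h0, hA, h1, hpB, hpτ⟩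
  calc ∑ i, p' i ≤ ∑ i, max (p' i) 0 := sum_le_sum fun i _ => le_max_left _ _
    _ ≤ ∑ i, p i := isMaxOn_iff.1 hmax (x', _) ⟨hf'.posPart hv hB, fun i => le_max_right _ _⟩

lemma optRev_le_optRev_univ (hv : ∀ i, 0 ≤ v i) (hB : ∀ i, 0 ≤ B i) (A : Finset (Fin n)) :
    optRev n v B τ A ≤ optRev n v B τ univ := by
  obtain ⟨x, p, hf, -, hsum⟩ := exists_isFeasible_sum_eq_optRev (τ := τ) hv hB A
  exact hsum ▸ (hf.mono (subset_univ A)).sum_le_optRev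

lemma optRev_le_add_sum_filter (hv : ∀ i, 0 ≤ v i) (hB : ∀ i, 0 ≤ B i) (hτ : ∀ i, 0 < τ i)
    (A : Finset (Fin n)) {r : ℝ} (hr : 0 ≤ r) :
    optRev n v B τ A ≤ r + ∑ i ∈ A with r ≤ v i / τ i, B i := by
  obtain ⟨x, p, hf, -, hsum⟩ := exists_isFeasible_sum_eq_optRev (τ := τ) hv hB A
  have hxA : ∑ i ∈ A, x i ≤ 1 :=
    (sum_le_sum_of_subset_of_nonneg (subset_univ A) fun i _ _ => hf.alloc_nonneg i).trans
      hf.sum_alloc_le_one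
  calc optRev n v B τ A = ∑ i ∈ A, p i := by
        rw [← hsum, sum_subset (subset_univ A) fun i _ hi => (hf.eq_zero_of_notMem i hi).2]
    _ ≤ ∑ i ∈ A, ((if r ≤ v i / τ i then B i else 0) + x i * r) :=
        sum_le_sum fun i _ => hf.le_ite_add_mul hτ hr i
    _ = (∑ i ∈ A with r ≤ v i / τ i, B i) + (∑ i ∈ A, x i) * r := by
        rw [sum_add_distrib, sum_filter, sum_mul]
    _ ≤ r + ∑ i ∈ A with r ≤ v i / τ i, B i := by nlinarith

end OfflineOptimum

section Concentration

variable {ι : Type*} [DecidableEq ι]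

lemma sum_powerset_sq_sub_half_sum (p : ι → ℝ) (u : Finset ι) :
    ∑ S ∈ u.powerset, (∑ i ∈ S, p i - (∑ i ∈ u, p i) / 2) ^ 2
      = 2 ^ #u * (∑ i ∈ u, p i ^ 2) / 4 := by
  induction u using Finset.induction_on with
  | empty => simp
  | insert a s ha ih =>
    have hins : ∀ t ∈ s.powerset, ∑ i ∈ insert a t, p i = p a + ∑ i ∈ t, p i := fun t ht =>
      sum_insert fun hat => ha (mem_powerset.1 ht hat)
    rw [sum_powerset_insert ha, sum_insert ha, sum_insert ha, card_insert_of_notMem ha,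
      ← sum_add_distrib]
    calc _ = ∑ t ∈ s.powerset, (2 * (∑ i ∈ t, p i - (∑ i ∈ s, p i) / 2) ^ 2 + p a ^ 2 / 2) :=
          sum_congr rfl fun t ht => by rw [hins t ht]; ring
      _ = 2 * (2 ^ #s * (∑ i ∈ s, p i ^ 2) / 4) + 2 ^ #s * (p a ^ 2 / 2) := by
          rw [sum_add_distrib, ← mul_sum, ih, sum_const, card_powerset, nsmul_eq_mul]
          push_cast
          ring
      _ = _ := by ring

variable [Fintype ι]

/-- Chebyshev's inequality, with the variance `∑ i, p i ^ 2 / 4` of the weight of a uniformly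
random subset. -/
lemma three_quarters_le_card_filter_sum_mem (p : ι → ℝ) (hp : ∀ i, 0 ≤ p i)
    (hpos : 0 < ∑ i, p i) (hsmall : ∀ i, 36 * p i ≤ ∑ j, p j) :
    3 / 4 * 2 ^ Fintype.card ι ≤
      (#{S : Finset ι | (∑ i, p i) / 3 ≤ ∑ i ∈ S, p i ∧ ∑ i ∈ S, p i ≤ 2 * (∑ i, p i) / 3} :
        ℝ) := by
  set D := ∑ i, p i
  set good := ({S : Finset ι | D / 3 ≤ ∑ i ∈ S, p i ∧ ∑ i ∈ S, p i ≤ 2 * D / 3} : Finset _)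
  set bad := ({S : Finset ι | ¬(D / 3 ≤ ∑ i ∈ S, p i ∧ ∑ i ∈ S, p i ≤ 2 * D / 3)} : Finset _)
  have hsplit : (#good : ℝ) + #bad = 2 ^ Fintype.card ι := by
    exact_mod_cast (show #good + #bad = 2 ^ Fintype.card ι by
      rw [card_filter_add_card_filter_not, card_univ, Fintype.card_finset])
  have hsq : ∑ i, p i ^ 2 ≤ D ^ 2 / 36 := by
    calc ∑ i, p i ^ 2 ≤ ∑ i, p i * (D / 36) :=
          sum_le_sum fun i _ => by
            rw [sq]; exact mul_le_mul_of_nonneg_left (by linarith [hsmall i]) (hp i)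
      _ = D ^ 2 / 36 := by rw [← sum_mul]; ring
  have hbad : (#bad : ℝ) * (D / 6) ^ 2 ≤ 2 ^ Fintype.card ι * (D ^ 2 / 36) / 4 := by
    calc (#bad : ℝ) * (D / 6) ^ 2 ≤ ∑ S ∈ bad, (∑ i ∈ S, p i - D / 2) ^ 2 := by
          rw [← nsmul_eq_mul]
          refine card_nsmul_le_sum _ _ _ fun S hS => ?_
          rcases not_and_or.1 (mem_filter.1 hS).2 with h | h <;> push Not at h <;> nlinarith
      _ ≤ ∑ S, (∑ i ∈ S, p i - D / 2) ^ 2 :=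
          sum_le_sum_of_subset_of_nonneg (subset_univ _) fun _ _ _ => sq_nonneg _
      _ = 2 ^ Fintype.card ι * (∑ i, p i ^ 2) / 4 := by
          rw [← powerset_univ, sum_powerset_sq_sub_half_sum, card_univ]
      _ ≤ 2 ^ Fintype.card ι * (D ^ 2 / 36) / 4 := by gcongr
  have hD2 : 0 < D ^ 2 := by positivity
  nlinarith

end Concentration

section RandomSampling

variable {n : ℕ} {v B τ : Fin n → ℝ}

/-- The reserve price `optRev S / 4` lies in `[OPT/12, OPT/4]`, so the complement still has
`OPT/12` of budget willing to pay it. -/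
lemma div_twelve_le_sellRev (hv : ∀ i, 0 ≤ v i) (hB : ∀ i, 0 ≤ B i) (hτ : ∀ i, 0 < τ i)
    (hpos : 0 < optRev n v B τ univ) (S : Finset (Fin n))
    (hS : optRev n v B τ univ / 3 ≤ optRev n v B τ S)
    (hSc : optRev n v B τ univ / 3 ≤ optRev n v B τ (univ \ S)) :
    optRev n v B τ univ / 12 ≤
      sellRev n v B τ (optRev n v B τ S / 4) ((univ \ S).sort (· ≤ ·)) 1 := by
  have hr : optRev n v B τ S / 4 ≤ optRev n v B τ univ / 4 := by
    gcongr; exact optRev_le_optRev_univ hv hB S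
  have hbudget := optRev_le_add_sum_filter hv hB hτ (univ \ S)
    (r := optRev n v B τ S / 4) (by linarith)
  exact (le_min (by linarith) (by linarith)).trans (min_le_sellRev_sort (by linarith) hB _)

lemma two_pow_mul_div_sixteen_le_sum_sellRev (hv : ∀ i, 0 ≤ v i) (hB : ∀ i, 0 ≤ B i)
    (hτ : ∀ i, 0 < τ i) {x p : Fin n → ℝ} (hf : IsFeasible v B τ univ x p) (hp : ∀ i, 0 ≤ p i)
    (hopt : ∑ i, p i = optRev n v B τ univ) (hpos : 0 < optRev n v B τ univ)
    (hsmall : ∀ i, 36 * p i ≤ optRev n v B τ univ) :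
    2 ^ n * (optRev n v B τ univ / 16) ≤
      ∑ S : Finset (Fin n), sellRev n v B τ (optRev n v B τ S / 4) ((univ \ S).sort (· ≤ ·)) 1 := by
  set K := optRev n v B τ univ
  set good := ({S : Finset (Fin n) | K / 3 ≤ ∑ i ∈ S, p i ∧ ∑ i ∈ S, p i ≤ 2 * K / 3} : Finset _)
  have hcard : 3 / 4 * 2 ^ n ≤ (#good : ℝ) := by
    simpa [hopt] using three_quarters_le_card_filter_sum_mem p hp (hopt ▸ hpos) (hopt ▸ hsmall)
  have hgood : ∀ S ∈ good, K / 12 ≤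
      sellRev n v B τ (optRev n v B τ S / 4) ((univ \ S).sort (· ≤ ·)) 1 := by
    intro S hS
    obtain ⟨hlow, hhigh⟩ := (mem_filter.1 hS).2
    have hcompl : ∑ i ∈ univ \ S, p i + ∑ i ∈ S, p i = K := hopt ▸ sum_sdiff (subset_univ S)
    refine div_twelve_le_sellRev hv hB hτ hpos S ?_ ?_
    · exact hlow.trans (hf.sum_le_optRev_restrict hB S)
    · exact (by linarith : K / 3 ≤ ∑ i ∈ univ \ S, p i).trans (hf.sum_le_optRev_restrict hB _)
  calc 2 ^ n * (K / 16) = 3 / 4 * 2 ^ n * (K / 12) := by ring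
    _ ≤ #good * (K / 12) := by gcongr
    _ ≤ ∑ S ∈ good, sellRev n v B τ (optRev n v B τ S / 4) ((univ \ S).sort (· ≤ ·)) 1 := by
        rw [← nsmul_eq_mul]; exact card_nsmul_le_sum _ _ _ hgood
    _ ≤ _ := sum_le_sum_of_subset_of_nonneg (subset_univ _) fun S _ _ =>
        sellRev_nonneg (div_nonneg (optRev_nonneg hB S) zero_le_four) hB _ zero_le_one

end RandomSampling

/-- Single divisible item auction (fully private setting): the mechanism that with
probability 9/13 runs the indivisible first-price procedure (revenue
`max_k min (B k) (v k / τ k)`) and with probability 4/13 runs the random-sampling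
procedure (sample each agent into `S` independently with probability 1/2, set the
reserve price to a quarter of the optimal revenue restricted to `S`, and sell
sequentially to the remaining agents in a fixed order) has expected revenue at least
`OPT/52`. -/
theorem stmt_9 (n : ℕ) (hn : 0 < n) (v B τ : Fin n → ℝ)
    (hv : ∀ i, 0 ≤ v i) (hB : ∀ i, 0 < B i) (hτ : ∀ i, 0 < τ i) :
    optRev n v B τ Finset.univ / 52 ≤
      (9 / 13) * (Finset.univ.sup'
          (Finset.univ_nonempty_iff.mpr (Fin.pos_iff_nonempty.mp hn))
          (fun k => min (B k) (v k / τ k)))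
      + (4 / 13) * (∑ S : Finset (Fin n),
          sellRev n v B τ (optRev n v B τ S / 4)
            ((Finset.univ \ S).sort (· ≤ ·)) 1) / 2 ^ n := by
  set M := univ.sup' (univ_nonempty_iff.mpr (Fin.pos_iff_nonempty.mp hn))
    fun k => min (B k) (v k / τ k)
  set K := optRev n v B τ univ
  set T := ∑ S : Finset (Fin n), sellRev n v B τ (optRev n v B τ S / 4) ((univ \ S).sort (· ≤ ·)) 1
  have hB0 : ∀ i, 0 ≤ B i := fun i => (hB i).le
  obtain ⟨x, p, hf, hp, hopt⟩ := exists_isFeasible_sum_eq_optRev (τ := τ) hv hB0 univ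
  have hpM : ∀ i, p i ≤ M := fun i =>
    (hf.le_min_budget hv hτ i).trans (le_sup' (fun k => min (B k) (v k / τ k)) (mem_univ i))
  have hM0 : 0 ≤ M := (hp ⟨0, hn⟩).trans (hpM ⟨0, hn⟩)
  have hT : 0 ≤ T := sum_nonneg fun S _ =>
    sellRev_nonneg (div_nonneg (optRev_nonneg hB0 S) zero_le_four) hB0 _ zero_le_one
  rw [mul_div_assoc]
  by_cases hMK : K / 36 ≤ M
  · nlinarith [div_nonneg hT (pow_nonneg zero_le_two n)]
  have hsampling := two_pow_mul_div_sixteen_le_sum_sellRev hv hB0 hτ hf hp hopt (by linarith)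
    fun i => by linarith [hpM i]
  have hTK : K / 16 ≤ T / 2 ^ n := by rw [le_div_iff₀ (by positivity)]; linarith
  linarith
end

section
/- Algorithm 6 (the single-item auction with public budgets) is feasible: for every agent i, the payment satisfies p_i ≤ B_i and τ_i·p_i ≤ x_i·v_i, and the total allocation satisfies Σ_i x_i ≤ 1. -/
/-!
Every payment has the form `p_i = x_i · c_i` with `x_i = A_i / D` for some `A_i ≤ B_i` and a
unit price `c_i ≤ D`, so `p_i ≤ B_i`; and `c_i ≤ w_i ≤ v_i / τ_i`, which is the RoS constraint.
If `B[k] > w_{k+1}`, the price `C[k]`, the least power of `1+ε` above `B[k]`, is at most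
`(1+ε) B[k]`, and at most `w_i` for `i ≤ k` because `B[k] ≤ w_k ≤ w_i` and `w_i` is a power
of `1+ε`.
Otherwise the price `(1+ε) w_{k+1}` is only charged when `w_i > w_{k+1}`, hence
`w_i ≥ (1+ε) w_{k+1}` (both are powers of `1+ε`), and agent `k+1` pays
`(w_{k+1} - B[k]) / (1+ε) < B_{k+1}` by maximality of `k`.
In both cases the allocations add up to `1 / (1+ε)`.
-/

open Finset

section Rounding

variable {b : ℝ}

lemma zpow_floor_logb_le (hb : 1 < b) {y : ℝ} (hy : 0 < y) : b ^ ⌊Real.logb b y⌋ ≤ y := by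
  calc b ^ ⌊Real.logb b y⌋ = b ^ (⌊Real.logb b y⌋ : ℝ) := (Real.rpow_intCast b _).symm
    _ ≤ b ^ Real.logb b y := Real.rpow_le_rpow_of_exponent_le hb.le (Int.floor_le _)
    _ = y := Real.rpow_logb (by linarith) hb.ne' hy

lemma zpow_ceil_logb_le_zpow (hb : 1 < b) {y : ℝ} (hy : 0 < y) {m : ℤ} (h : y ≤ b ^ m) :
    b ^ ⌈Real.logb b y⌉ ≤ b ^ m := by
  have hlog : Real.logb b y ≤ m := by
    rwa [Real.logb_le_iff_le_rpow hb hy, Real.rpow_intCast]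
  exact zpow_le_zpow_right₀ hb.le (Int.ceil_le.mpr hlog)

lemma zpow_ceil_logb_le_mul (hb : 1 < b) {y : ℝ} (hy : 0 < y) :
    b ^ ⌈Real.logb b y⌉ ≤ b * y := by
  have hb0 : 0 < b := by linarith
  calc b ^ ⌈Real.logb b y⌉ = b ^ (⌈Real.logb b y⌉ : ℝ) := (Real.rpow_intCast b _).symm
    _ ≤ b ^ (Real.logb b y + 1) :=
        Real.rpow_le_rpow_of_exponent_le hb.le (Int.ceil_lt_add_one _).le
    _ = b * y := by
        rw [Real.rpow_add hb0, Real.rpow_logb hb0 hb.ne' hy, Real.rpow_one, mul_comm]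

lemma mul_zpow_le_of_zpow_lt (hb : 1 < b) {m l : ℤ} (h : b ^ m < b ^ l) : b * b ^ m ≤ b ^ l := by
  have hml : m < l := (zpow_lt_zpow_iff_right₀ hb).mp h
  calc b * b ^ m = b ^ (m + 1) := by rw [zpow_add_one₀ (by linarith), mul_comm]
    _ ≤ b ^ l := zpow_le_zpow_right₀ hb.le hml

end Rounding

lemma sum_range_eq_sum_range_of_eq_zero {M : Type*} [AddCommMonoid M] {f : ℕ → M} {m n : ℕ}
    (hmn : m ≤ n) (hf : ∀ i < n, m ≤ i → f i = 0) :
    ∑ i ∈ range n, f i = ∑ i ∈ range m, f i := by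
  rw [← sum_range_add_sum_Ico f hmn,
    sum_eq_zero (s := Ico m n) fun i hi => hf i (mem_Ico.mp hi).2 (mem_Ico.mp hi).1, add_zero]

lemma le_and_mul_le_of_eq_div {A D c v τ x p : ℝ} (hA : 0 ≤ A) (hD : 0 < D) (hτ : 0 < τ)
    (hx : x = A / D) (hp : p = x * c) (hcD : c ≤ D) (hcv : c ≤ v / τ) :
    p ≤ A ∧ τ * p ≤ x * v := by
  have hx0 : 0 ≤ x := hx ▸ div_nonneg hA hD.le
  refine ⟨?_, ?_⟩
  · calc p ≤ x * D := hp ▸ mul_le_mul_of_nonneg_left hcD hx0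
      _ = A := by rw [hx, div_mul_cancel₀ _ hD.ne']
  · calc τ * p = x * (c * τ) := by rw [hp]; ring
      _ ≤ x * v := mul_le_mul_of_nonneg_left ((le_div_iff₀ hτ).mp hcv) hx0

def IsFeasible_s10 (n : ℕ) (B v τ x p : ℕ → ℝ) : Prop :=
  (∀ i < n, p i ≤ B i ∧ τ i * p i ≤ x i * v i) ∧ ∑ i ∈ range n, x i ≤ 1

section Feasibility

variable {n k : ℕ} {b S : ℝ} {B v τ x p : ℕ → ℝ}

lemma agent_feasible_of_eq_zero {i : ℕ} (hBi : 0 ≤ B i) (hx : x i = 0) (hp : p i = 0) :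
    p i ≤ B i ∧ τ i * p i ≤ x i * v i :=
  ⟨hp ▸ hBi, by simp [hx, hp]⟩

lemma sum_range_succ_eq_div {D : ℝ} (hS : S = ∑ i ∈ range (k + 1), B i)
    (hx : ∀ i ≤ k, x i = B i / D) : ∑ i ∈ range (k + 1), x i = S / D := by
  rw [sum_congr rfl fun i hi => hx i (Nat.lt_succ_iff.mp (mem_range.mp hi)), ← sum_div, hS]

lemma isFeasible_of_uniform_price {C : ℝ} (hkn : k < n) (hb : 1 ≤ b)
    (hB : ∀ i < n, 0 ≤ B i) (hτ : ∀ i < n, 0 < τ i)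
    (hS : S = ∑ i ∈ range (k + 1), B i) (hS0 : 0 < S)
    (hCS : C ≤ b * S) (hCv : ∀ i ≤ k, C ≤ v i / τ i)
    (halloc : ∀ i < n,
      (i ≤ k → x i = B i / (b * S) ∧ p i = x i * C) ∧ (k < i → x i = 0 ∧ p i = 0)) :
    IsFeasible_s10 n B v τ x p := by
  have hbS : 0 < b * S := by positivity
  refine ⟨fun i hi => ?_, ?_⟩
  · rcases le_or_gt i k with hik | hik
    · obtain ⟨hx, hp⟩ := (halloc i hi).1 hik
      exact le_and_mul_le_of_eq_div (hB i hi) hbS (hτ i hi) hx hp hCS (hCv i hik)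
    · obtain ⟨hx, hp⟩ := (halloc i hi).2 hik
      exact agent_feasible_of_eq_zero (hB i hi) hx hp
  · calc ∑ i ∈ range n, x i = ∑ i ∈ range (k + 1), x i :=
          sum_range_eq_sum_range_of_eq_zero hkn fun i hi hik => ((halloc i hi).2 hik).1
      _ = S / (b * S) := sum_range_succ_eq_div hS fun i hik => ((halloc i (by omega)).1 hik).1
      _ = 1 / b := by field_simp
      _ ≤ 1 := div_le_one_of_le₀ hb (by linarith)

lemma isFeasible_of_split_price {W : ℝ} {w : ℕ → ℝ} (hk : k + 1 < n) (hb : 1 ≤ b)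
    (hB : ∀ i < n, 0 ≤ B i) (hτ : ∀ i < n, 0 < τ i)
    (hS : S = ∑ i ∈ range (k + 1), B i) (hSW : S ≤ W) (hWS : W < S + B (k + 1)) (hW : 0 < W)
    (hwv : ∀ i ≤ k + 1, w i ≤ v i / τ i) (hWw : ∀ i ≤ k + 1, W ≤ w i)
    (hgap : ∀ i ≤ k, W < w i → b * W ≤ w i)
    (halloc : ∀ i < n,
      (i ≤ k → x i = B i / (b * W) ∧ p i = if W < w i then x i * (b * W) else x i * W) ∧
      (i = k + 1 → x i = 1 / b - S / (b * W) ∧ p i = x i * W) ∧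
      (k + 1 < i → x i = 0 ∧ p i = 0)) :
    IsFeasible_s10 n B v τ x p := by
  have hb0 : 0 < b := by linarith
  have hbW : 0 < b * W := by positivity
  have hWbW : W ≤ b * W := le_mul_of_one_le_left hW.le hb
  have hx_last : x (k + 1) = 1 / b - S / (b * W) := ((halloc (k + 1) hk).2.1 rfl).1
  refine ⟨fun i hi => ?_, ?_⟩
  · rcases lt_trichotomy i (k + 1) with hik | rfl | hik
    · obtain ⟨hx, hp⟩ := (halloc i hi).1 (by omega)
      obtain ⟨c, hpc, hcD, hcw⟩ : ∃ c, p i = x i * c ∧ c ≤ b * W ∧ c ≤ w i := by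
        split_ifs at hp with hlt
        · exact ⟨_, hp, le_rfl, hgap i (by omega) hlt⟩
        · exact ⟨_, hp, hWbW, hWw i (by omega)⟩
      exact le_and_mul_le_of_eq_div (hB i hi) hbW (hτ i hi) hx hpc hcD
        (hcw.trans (hwv i (by omega)))
    · have hx : x (k + 1) = (W - S) / (b * W) := by rw [hx_last]; field_simp
      have hp := ((halloc (k + 1) hi).2.1 rfl).2
      have := le_and_mul_le_of_eq_div (sub_nonneg.mpr hSW) hbW (hτ _ hi) hx hp hWbW
        ((hWw _ le_rfl).trans (hwv _ le_rfl))
      exact ⟨by linarith [this.1], this.2⟩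
    · obtain ⟨hx, hp⟩ := (halloc i hi).2.2 hik
      exact agent_feasible_of_eq_zero (hB i hi) hx hp
  · calc ∑ i ∈ range n, x i = ∑ i ∈ range (k + 1 + 1), x i :=
          sum_range_eq_sum_range_of_eq_zero hk fun i hi hik => ((halloc i hi).2.2 hik).1
      _ = S / (b * W) + (1 / b - S / (b * W)) := by
          rw [sum_range_succ, hx_last,
            sum_range_succ_eq_div hS fun i hik => ((halloc i (by omega)).1 hik).1]
      _ = 1 / b := by ring
      _ ≤ 1 := div_le_one_of_le₀ hb (by linarith)

end Feasibility

open Classical in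
/-- Feasibility of Algorithm 6 (single divisible item auction with public budgets):
with rounded values `w i = (1+ε)^⌊log_{1+ε}(v i/τ i)⌋`, agents reindexed so that `w` is
nonincreasing, `k` the maximum index with `B[k] = Σ_{i≤k} B i ≤ w k`, and the
allocation/payments as specified by the algorithm (case split on `B[k] > w (k+1)`),
every agent satisfies her budget and RoS constraints, and at most one unit of the item
is allocated.  Agents are indexed `0, …, n-1`. -/
theorem stmt_10 (n : ℕ) (ε : ℝ) (hε : 0 < ε) (B v τ : ℕ → ℝ)
    (hB : ∀ i < n, 0 < B i) (hv : ∀ i < n, 0 < v i) (hτ : ∀ i < n, 0 < τ i)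
    (w : ℕ → ℝ)
    (hw : ∀ i, w i = (1 + ε) ^ (⌊Real.logb (1 + ε) (v i / τ i)⌋ : ℤ))
    (hsort : ∀ i j, i ≤ j → j < n → w j ≤ w i)
    (k : ℕ) (hkn : k < n)
    (Bk : ℝ) (hBk : Bk = ∑ i ∈ Finset.range (k + 1), B i)
    (hkvalid : Bk ≤ w k)
    (hkmax : ∀ k' < n, (∑ i ∈ Finset.range (k' + 1), B i) ≤ w k' → k' ≤ k)
    (wnext : ℝ) (hwnext : wnext = if k + 1 < n then w (k + 1) else 0)
    (x p : ℕ → ℝ)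
    (hxp : if wnext < Bk then
        -- case `B[k] > w_{k+1}`: uniform price `C[k] = (1+ε)^⌈log_{1+ε} B[k]⌉`
        (∀ i < n,
          (i ≤ k → x i = B i / ((1 + ε) * Bk) ∧
            p i = x i * ((1 + ε) ^ (⌈Real.logb (1 + ε) Bk⌉ : ℤ))) ∧
          (k < i → x i = 0 ∧ p i = 0))
      else
        -- case `B[k] ≤ w_{k+1}`
        (∀ i < n,
          (i ≤ k → x i = B i / ((1 + ε) * wnext) ∧
            p i = (if wnext < w i then x i * ((1 + ε) * wnext) else x i * wnext)) ∧
          (i = k + 1 → x i = 1 / (1 + ε) - Bk / ((1 + ε) * wnext) ∧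
            p i = x i * wnext) ∧
          (k + 1 < i → x i = 0 ∧ p i = 0))) :
    (∀ i < n, p i ≤ B i ∧ τ i * p i ≤ x i * v i) ∧
      (∑ i ∈ Finset.range n, x i) ≤ 1 := by
  have hb : 1 < 1 + ε := by linarith
  have hwv : ∀ i < n, w i ≤ v i / τ i := fun i hi =>
    hw i ▸ zpow_floor_logb_le hb (div_pos (hv i hi) (hτ i hi))
  have hBk0 : 0 < Bk :=
    hBk ▸ sum_pos (fun i hi => hB i (by rw [mem_range] at hi; omega)) nonempty_range_add_one
  have hB0 : ∀ i < n, 0 ≤ B i := fun i hi => (hB i hi).le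
  by_cases hc : wnext < Bk
  · rw [if_pos hc] at hxp
    refine isFeasible_of_uniform_price hkn hb.le hB0 hτ hBk hBk0
      (zpow_ceil_logb_le_mul hb hBk0) (fun i hik => ?_) hxp
    have hBw : Bk ≤ w i := hkvalid.trans (hsort i k hik hkn)
    rw [hw i] at hBw
    exact (zpow_ceil_logb_le_zpow hb hBk0 hBw).trans (hw i ▸ hwv i (by omega))
  · rw [if_neg hc] at hxp
    replace hc := not_lt.mp hc
    have hk : k + 1 < n := by
      by_contra h
      rw [hwnext, if_neg h] at hc
      linarith
    rw [if_pos hk] at hwnext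
    subst hwnext
    have hmax : w (k + 1) < Bk + B (k + 1) := by
      by_contra! h
      have := hkmax (k + 1) hk (by rwa [sum_range_succ, ← hBk])
      omega
    refine isFeasible_of_split_price hk hb.le hB0 hτ hBk hc hmax (hw (k + 1) ▸ by positivity)
      (fun i hi => hwv i (by omega)) (fun i hi => hsort i (k + 1) hi hk)
      (fun i _ hlt => ?_) hxp
    rw [hw i, hw (k + 1)] at hlt ⊢
    exact mul_zpow_le_of_zpow_lt hb hlt
end

section
/- Algorithm 6 (the single-item auction with public budgets) achieves revenue at least OPT/((1+ε)(2+ε)), where OPT is the optimal offline revenue. -/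
/-!
Let `wnext = w (k+1)` (or `0` when there is no agent `k+1`). A feasible allocation collects at
most `Bk` from the agents `0, …, k`, and from every later agent `i` at most
`v i / τ i ≤ (1+ε) w i ≤ (1+ε) wnext` per unit of the item, so `OPT ≤ Bk + (1+ε) wnext`.
The algorithm collects at least `max Bk wnext / (1+ε)`: in the first branch the price rounds
`Bk` up to a power of `1+ε`; in the second every agent `i ≤ k` pays at least `wnext` per unit
and agent `k+1` buys the remaining supply at that price, for a total of `wnext / (1+ε)`.
Hence `OPT ≤ (2+ε) max Bk wnext ≤ (1+ε)(2+ε) ALG`.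
-/

namespace Real

variable {b x : ℝ}

lemma le_zpow_ceil_logb (hb : 1 < b) (hx : 0 < x) : x ≤ b ^ ⌈logb b x⌉ := by
  rw [← rpow_intCast, ← logb_le_iff_le_rpow hb hx]
  exact Int.le_ceil _

lemma le_mul_zpow_floor_logb (hb : 1 < b) (hx : 0 < x) : x ≤ b * b ^ ⌊logb b x⌋ := by
  have hlt : logb b x < ((⌊logb b x⌋ + 1 : ℤ) : ℝ) := by
    push_cast
    exact Int.lt_floor_add_one _
  rw [logb_lt_iff_lt_rpow hb hx, rpow_intCast, zpow_add_one₀ (by positivity)] at hlt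
  linarith

end Real

namespace Finset

lemma sum_range_eq_of_eq_zero {M : Type*} [AddCommMonoid M] {f : ℕ → M} {m n : ℕ}
    (hmn : m ≤ n) (hf : ∀ i, m ≤ i → i < n → f i = 0) :
    ∑ i ∈ range n, f i = ∑ i ∈ range m, f i :=
  (sum_subset (range_subset_range.2 hmn) fun i hin him =>
    hf i (not_lt.1 (mem_range.not.1 him)) (mem_range.1 hin)).symm

end Finset

open Finset

lemma sum_payments_le_of_feasible {n m : ℕ} (hmn : m ≤ n) {B v τ x p : ℕ → ℝ} {c : ℝ}
    (hc : 0 ≤ c) (hτ : ∀ i < n, 0 < τ i)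
    (hrate : ∀ i, m ≤ i → i < n → v i / τ i ≤ c)
    (hfeas : ∀ i < n, 0 ≤ x i ∧ p i ≤ B i ∧ p i * τ i ≤ x i * v i)
    (hsupply : ∑ i ∈ range n, x i ≤ 1) :
    ∑ i ∈ range n, p i ≤ ∑ i ∈ range m, B i + c := by
  rw [← sum_range_add_sum_Ico _ hmn]
  have htop : ∑ i ∈ range m, p i ≤ ∑ i ∈ range m, B i :=
    sum_le_sum fun i hi => (hfeas i (by simp at hi; omega)).2.1
  have hrest : ∑ i ∈ Ico m n, p i ≤ c := by
    have hunit : ∀ i ∈ Ico m n, p i ≤ x i * c := by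
      intro i hi
      obtain ⟨hmi, hin⟩ := mem_Ico.1 hi
      obtain ⟨hx, -, hpay⟩ := hfeas i hin
      calc p i ≤ x i * v i / τ i := (le_div_iff₀ (hτ i hin)).2 hpay
        _ = x i * (v i / τ i) := mul_div_assoc _ _ _
        _ ≤ x i * c := mul_le_mul_of_nonneg_left (hrate i hmi hin) hx
    have hx : ∑ i ∈ Ico m n, x i ≤ 1 := by
      refine le_trans ?_ hsupply
      rw [range_eq_Ico]
      exact sum_le_sum_of_subset_of_nonneg (Ico_subset_Ico_left (Nat.zero_le m))
        fun i hi _ => (hfeas i (mem_Ico.1 hi).2).1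
    calc ∑ i ∈ Ico m n, p i ≤ ∑ i ∈ Ico m n, x i * c := sum_le_sum hunit
      _ = (∑ i ∈ Ico m n, x i) * c := (sum_mul _ _ _).symm
      _ ≤ c := mul_le_of_le_one_left hc hx
  linarith

lemma sSup_revenue_le {n m : ℕ} (hmn : m ≤ n) {B v τ : ℕ → ℝ} {c : ℝ}
    (hB : ∀ i < m, 0 ≤ B i) (hc : 0 ≤ c) (hτ : ∀ i < n, 0 < τ i)
    (hrate : ∀ i, m ≤ i → i < n → v i / τ i ≤ c) :
    sSup {t : ℝ | ∃ x' p' : ℕ → ℝ,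
        (∀ i < n, 0 ≤ x' i ∧ p' i ≤ B i ∧ p' i * τ i ≤ x' i * v i) ∧
        (∑ i ∈ range n, x' i) ≤ 1 ∧
        t = ∑ i ∈ range n, p' i} ≤ ∑ i ∈ range m, B i + c := by
  refine Real.sSup_le ?_ (add_nonneg (sum_nonneg fun i hi => hB i (mem_range.1 hi)) hc)
  rintro t ⟨x', p', hfeas, hsupply, rfl⟩
  exact sum_payments_le_of_feasible hmn hc hτ hrate hfeas hsupply

variable {n k : ℕ} {ε Bk C w' : ℝ} {B w x p : ℕ → ℝ}

lemma sum_payments_of_budget_branch (hkn : k < n) (hBk : Bk = ∑ i ∈ range (k + 1), B i)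
    (hBk0 : Bk ≠ 0) (hε : 0 < ε)
    (halloc : ∀ i < n, (i ≤ k → x i = B i / ((1 + ε) * Bk) ∧ p i = x i * C) ∧
      (k < i → x i = 0 ∧ p i = 0)) :
    ∑ i ∈ range n, p i = C / (1 + ε) := by
  rw [sum_range_eq_of_eq_zero hkn fun i hki hin => ((halloc i hin).2 hki).2]
  have hpay : ∀ i ∈ range (k + 1), p i = B i * (C / ((1 + ε) * Bk)) := by
    intro i hi
    have hik : i ≤ k := by simp at hi; omega
    obtain ⟨hx, hp⟩ := (halloc i (by omega)).1 hik
    rw [hp, hx]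
    ring
  rw [sum_congr rfl hpay, ← sum_mul, ← hBk]
  field_simp

lemma le_mul_sum_payments_of_price_branch (hkn : k + 1 < n)
    (hB : ∀ i ≤ k, 0 ≤ B i) (hBk : Bk = ∑ i ∈ range (k + 1), B i) (hw' : 0 < w')
    (hε : 0 < ε)
    (halloc : ∀ i < n,
      (i ≤ k → x i = B i / ((1 + ε) * w') ∧
        p i = (if w' < w i then x i * ((1 + ε) * w') else x i * w')) ∧
      (i = k + 1 → x i = 1 / (1 + ε) - Bk / ((1 + ε) * w') ∧ p i = x i * w') ∧
      (k + 1 < i → x i = 0 ∧ p i = 0)) :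
    w' ≤ (1 + ε) * ∑ i ∈ range n, p i := by
  rw [sum_range_eq_of_eq_zero hkn fun i hki hin => ((halloc i hin).2.2 hki).2,
    sum_range_succ]
  have htop : Bk / (1 + ε) ≤ ∑ i ∈ range (k + 1), p i := by
    rw [hBk, sum_div]
    refine sum_le_sum fun i hi => ?_
    have hik : i ≤ k := by simp at hi; omega
    obtain ⟨hx, hp⟩ := (halloc i (by omega)).1 hik
    have hbase : x i * w' = B i / (1 + ε) := by rw [hx]; field_simp
    have hx0 : 0 ≤ x i := by rw [hx]; exact div_nonneg (hB i hik) (by positivity)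
    rw [hp, ← hbase]
    split_ifs
    · exact mul_le_mul_of_nonneg_left (le_mul_of_one_le_left hw'.le (by linarith)) hx0
    · exact le_rfl
  have hlast : p (k + 1) = (w' - Bk) / (1 + ε) := by
    obtain ⟨hx, hp⟩ := (halloc (k + 1) hkn).2.1 rfl
    rw [hp, hx]
    field_simp
  calc w' = (1 + ε) * (Bk / (1 + ε) + (w' - Bk) / (1 + ε)) := by field_simp; ring
    _ ≤ _ := by rw [hlast]; gcongr

open Classical in
theorem stmt_11_general (n : ℕ) (ε : ℝ) (hε : 0 < ε) (B v τ : ℕ → ℝ)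
    (hB : ∀ i < n, 0 < B i) (hv : ∀ i < n, 0 < v i) (hτ : ∀ i < n, 0 < τ i)
    (w : ℕ → ℝ)
    (hw : ∀ i, w i = (1 + ε) ^ (⌊Real.logb (1 + ε) (v i / τ i)⌋ : ℤ))
    (hsort : ∀ i j, i ≤ j → j < n → w j ≤ w i)
    (k : ℕ) (hkn : k < n)
    (Bk : ℝ) (hBk : Bk = ∑ i ∈ Finset.range (k + 1), B i)
    (wnext : ℝ) (hwnext : wnext = if k + 1 < n then w (k + 1) else 0)
    (x p : ℕ → ℝ)
    (hxp : if wnext < Bk then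
        (∀ i < n,
          (i ≤ k → x i = B i / ((1 + ε) * Bk) ∧
            p i = x i * ((1 + ε) ^ (⌈Real.logb (1 + ε) Bk⌉ : ℤ))) ∧
          (k < i → x i = 0 ∧ p i = 0))
      else
        (∀ i < n,
          (i ≤ k → x i = B i / ((1 + ε) * wnext) ∧
            p i = (if wnext < w i then x i * ((1 + ε) * wnext) else x i * wnext)) ∧
          (i = k + 1 → x i = 1 / (1 + ε) - Bk / ((1 + ε) * wnext) ∧
            p i = x i * wnext) ∧
          (k + 1 < i → x i = 0 ∧ p i = 0))) :
    sSup {t : ℝ | ∃ x' p' : ℕ → ℝ,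
        (∀ i < n, 0 ≤ x' i ∧ p' i ≤ B i ∧ p' i * τ i ≤ x' i * v i) ∧
        (∑ i ∈ Finset.range n, x' i) ≤ 1 ∧
        t = ∑ i ∈ Finset.range n, p' i}
      / ((1 + ε) * (2 + ε))
    ≤ ∑ i ∈ Finset.range n, p i := by
  have hε1 : (1 : ℝ) < 1 + ε := by linarith
  have hBk0 : 0 < Bk := hBk ▸ sum_pos (fun i hi => hB i (by simp at hi; omega)) ⟨0, by simp⟩
  have hwnext0 : 0 ≤ wnext := by
    rw [hwnext, hw]; split_ifs <;> positivity
  have hrate : ∀ i, k + 1 ≤ i → i < n → v i / τ i ≤ (1 + ε) * wnext := by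
    intro i hki hin
    have hwi : w i ≤ wnext := by
      rw [hwnext, if_pos (by omega)]
      exact hsort _ _ hki hin
    calc v i / τ i ≤ (1 + ε) * w i :=
          hw i ▸ Real.le_mul_zpow_floor_logb hε1 (div_pos (hv i hin) (hτ i hin))
      _ ≤ (1 + ε) * wnext := by gcongr
  have hOPT := hBk ▸
    sSup_revenue_le hkn (fun i hi => (hB i (by omega)).le) (by positivity) hτ hrate
  set ALG := ∑ i ∈ Finset.range n, p i
  obtain ⟨hBk_le, hwnext_le⟩ : Bk ≤ (1 + ε) * ALG ∧ wnext ≤ (1 + ε) * ALG := by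
    split_ifs at hxp with hbranch
    · have hC := Real.le_zpow_ceil_logb hε1 hBk0
      have hrev : ALG = _ / (1 + ε) := sum_payments_of_budget_branch hkn hBk hBk0.ne' hε hxp
      rw [hrev, mul_div_cancel₀ _ (by positivity)]
      exact ⟨hC, hbranch.le.trans hC⟩
    · push Not at hbranch
      have hk1 : k + 1 < n := by
        by_contra hk1
        rw [hwnext, if_neg hk1] at hbranch
        linarith
      have := le_mul_sum_payments_of_price_branch hk1 (fun i hi => (hB i (by omega)).le) hBk
        (hBk0.trans_le hbranch) hε hxp
      exact ⟨hbranch.trans this, this⟩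
  rw [div_le_iff₀ (by positivity)]
  calc _ ≤ Bk + (1 + ε) * wnext := hOPT
    _ ≤ (1 + ε) * ALG + (1 + ε) * ((1 + ε) * ALG) :=
        add_le_add hBk_le (mul_le_mul_of_nonneg_left hwnext_le (by positivity))
    _ = ALG * ((1 + ε) * (2 + ε)) := by ring

open Classical in
/-- Approximation ratio of Algorithm 6 (single divisible item auction with public
budgets): with the notation of the feasibility lemma, the revenue of the algorithm is
at least `OPT / ((1+ε)(2+ε))`, where `OPT` is the optimal offline revenue, i.e. the
supremum of `Σ p' i` over feasible solutions (`x' ≥ 0`, `Σ x' ≤ 1`, `p' i ≤ B i`,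
`p' i * τ i ≤ x' i * v i`). -/
theorem stmt_11 (n : ℕ) (ε : ℝ) (hε : 0 < ε) (B v τ : ℕ → ℝ)
    (hB : ∀ i < n, 0 < B i) (hv : ∀ i < n, 0 < v i) (hτ : ∀ i < n, 0 < τ i)
    (w : ℕ → ℝ)
    (hw : ∀ i, w i = (1 + ε) ^ (⌊Real.logb (1 + ε) (v i / τ i)⌋ : ℤ))
    (hsort : ∀ i j, i ≤ j → j < n → w j ≤ w i)
    (k : ℕ) (hkn : k < n)
    (Bk : ℝ) (hBk : Bk = ∑ i ∈ Finset.range (k + 1), B i)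
    (hkvalid : Bk ≤ w k)
    (hkmax : ∀ k' < n, (∑ i ∈ Finset.range (k' + 1), B i) ≤ w k' → k' ≤ k)
    (wnext : ℝ) (hwnext : wnext = if k + 1 < n then w (k + 1) else 0)
    (x p : ℕ → ℝ)
    (hxp : if wnext < Bk then
        (∀ i < n,
          (i ≤ k → x i = B i / ((1 + ε) * Bk) ∧
            p i = x i * ((1 + ε) ^ (⌈Real.logb (1 + ε) Bk⌉ : ℤ))) ∧
          (k < i → x i = 0 ∧ p i = 0))
      else
        (∀ i < n,
          (i ≤ k → x i = B i / ((1 + ε) * wnext) ∧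
            p i = (if wnext < w i then x i * ((1 + ε) * wnext) else x i * wnext)) ∧
          (i = k + 1 → x i = 1 / (1 + ε) - Bk / ((1 + ε) * wnext) ∧
            p i = x i * wnext) ∧
          (k + 1 < i → x i = 0 ∧ p i = 0))) :
    sSup {t : ℝ | ∃ x' p' : ℕ → ℝ,
        (∀ i < n, 0 ≤ x' i ∧ p' i ≤ B i ∧ p' i * τ i ≤ x' i * v i) ∧
        (∑ i ∈ Finset.range n, x' i) ≤ 1 ∧
        t = ∑ i ∈ Finset.range n, p' i}
      / ((1 + ε) * (2 + ε))
    ≤ ∑ i ∈ Finset.range n, p i :=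
  stmt_11_general n ε hε B v τ hB hv hτ w hw hsort k hkn Bk hBk wnext hwnext x p hxp
end

section
/- In Algorithm 6, for any fixed agent a and fixed profiles of the other agents, the allocated fraction x_a is non-increasing as the agent's reported ratio v_a/τ_a decreases. -/
/-!
Lowering `a`'s report only moves `a` later in the order of Algorithm 6: this shrinks the prefix
budgets of the other agents and enlarges that of `a`. Hence every agent other than `a` that was
valid stays valid, and sits before the new last valid agent `m'`. If `a` is in the top group under
the new report, it was in it before as well, at a clearing price no larger than the new one.
Otherwise `a` can only receive something as the agent right after `m'`, namely
`(1 - B[m']/w'_a)/(1+ε)`. If `a` was in the top group before, the old price is at most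
`B[m'] + B_a`, and `w'_a < B[m'] + B_a` makes the old share the larger one. If not, `a` was
already right after the old last valid agent, whose prefix budget is at most `B[m']`, while
`w'_a ≤ w_a`.
-/

/-- The reported ratio of each agent, rounded down to a power of `1+ε`. -/
noncomputable def wfun (n : ℕ) (ε : ℝ) (ρ : Fin n → ℝ) (i : Fin n) : ℝ :=
  (1 + ε) ^ (⌊Real.logb (1 + ε) (ρ i)⌋ : ℤ)

/-- The permutation sorting the agents in decreasing order of rounded ratio `wfun`,
breaking ties in a fixed manner (by agent index): position `t` holds agent
`sortPerm n ε ρ t`. -/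
noncomputable def sortPerm (n : ℕ) (ε : ℝ) (ρ : Fin n → ℝ) : Equiv.Perm (Fin n) :=
  Tuple.sort (fun i => (toLex (-(wfun n ε ρ i), i) : Lex (ℝ × Fin n)))

/-- The cumulative budget `B[t]` of the agents in the first `t+1` sorted positions. -/
noncomputable def bcum (n : ℕ) (ε : ℝ) (B ρ : Fin n → ℝ) (t : Fin n) : ℝ :=
  ∑ s ∈ Finset.univ.filter (fun s => s ≤ t), B (sortPerm n ε ρ s)

/-- The set of positions `t` with `B[t] ≤ w_{σ(t)}`; Algorithm 6 uses its maximum `k`. -/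
noncomputable def validSet (n : ℕ) (ε : ℝ) (B ρ : Fin n → ℝ) : Finset (Fin n) :=
  Finset.univ.filter (fun t => bcum n ε B ρ t ≤ wfun n ε ρ (sortPerm n ε ρ t))

open Classical in
/-- Algorithm 6 (single divisible item with public budgets), as a function of the
budgets `B` and the reported ratios `ρ i` (standing for `v i / τ i`): returns the
allocation and payment of every agent.  With `k` the maximum valid position,
market clearing price `p̄ = max (B[k]) w_{k+1}` (where `w_{k+1} = 0` if `k` is last):
if `B[k] > w_{k+1}`, the top-`k` agents get `B i/((1+ε)B[k])` at per-unit price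
`C[k] = (1+ε)^⌈log_{1+ε} B[k]⌉`; otherwise they get `B i/((1+ε)w_{k+1})` at per-unit
price `(1+ε)w_{k+1}` (or `w_{k+1}` if `w i = w_{k+1}`), and the agent at position `k+1`
gets the leftover `1/(1+ε) − B[k]/((1+ε)w_{k+1})` at per-unit price `w_{k+1}`. -/
noncomputable def mech (n : ℕ) (ε : ℝ) (B ρ : Fin n → ℝ) :
    (Fin n → ℝ) × (Fin n → ℝ) :=
  if h : (validSet n ε B ρ).Nonempty then
    let σ := sortPerm n ε ρ
    let k := (validSet n ε B ρ).max' h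
    let Bk := bcum n ε B ρ k
    let wnext : ℝ :=
      if h2 : (k : ℕ) + 1 < n then wfun n ε ρ (σ ⟨(k : ℕ) + 1, h2⟩) else 0
    if wnext < Bk then
      let C : ℝ := (1 + ε) ^ (⌈Real.logb (1 + ε) Bk⌉ : ℤ)
      (fun a => if σ.symm a ≤ k then B a / ((1 + ε) * Bk) else 0,
       fun a => if σ.symm a ≤ k then (B a / ((1 + ε) * Bk)) * C else 0)
    else
      (fun a => if σ.symm a ≤ k then B a / ((1 + ε) * wnext)
        else if (σ.symm a : ℕ) = (k : ℕ) + 1 then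
          1 / (1 + ε) - Bk / ((1 + ε) * wnext)
        else 0,
       fun a => if σ.symm a ≤ k then
          (if wnext < wfun n ε ρ a then (B a / ((1 + ε) * wnext)) * ((1 + ε) * wnext)
           else (B a / ((1 + ε) * wnext)) * wnext)
        else if (σ.symm a : ℕ) = (k : ℕ) + 1 then
          (1 / (1 + ε) - Bk / ((1 + ε) * wnext)) * wnext
        else 0)
  else (fun _ => 0, fun _ => 0)

open Finset

-- The key by which `sortPerm` sorts the agents.
noncomputable def sortKey (n : ℕ) (ε : ℝ) (ρ : Fin n → ℝ) (i : Fin n) : Lex (ℝ × Fin n) :=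
  toLex (-(wfun n ε ρ i), i)

noncomputable def prefixBudget (n : ℕ) (ε : ℝ) (B ρ : Fin n → ℝ) (i : Fin n) : ℝ :=
  ∑ j ∈ univ.filter (fun j => sortKey n ε ρ j ≤ sortKey n ε ρ i), B j

def IsNext (n : ℕ) (ε : ℝ) (ρ : Fin n → ℝ) (m i : Fin n) : Prop :=
  sortKey n ε ρ m < sortKey n ε ρ i ∧
    ∀ j, sortKey n ε ρ m < sortKey n ε ρ j → sortKey n ε ρ i ≤ sortKey n ε ρ j

noncomputable def lastValid {n : ℕ} {ε : ℝ} {B ρ : Fin n → ℝ}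
    (h : (validSet n ε B ρ).Nonempty) : Fin n :=
  sortPerm n ε ρ ((validSet n ε B ρ).max' h)

noncomputable def nextRatio {n : ℕ} {ε : ℝ} {B ρ : Fin n → ℝ}
    (h : (validSet n ε B ρ).Nonempty) : ℝ :=
  if h2 : ((validSet n ε B ρ).max' h : ℕ) + 1 < n then
    wfun n ε ρ (sortPerm n ε ρ ⟨((validSet n ε B ρ).max' h : ℕ) + 1, h2⟩) else 0

-- The market clearing price `p̄ = max{B[k], w_{k+1}}` of Algorithm 6.
noncomputable def clearingPrice {n : ℕ} {ε : ℝ} {B ρ : Fin n → ℝ}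
    (h : (validSet n ε B ρ).Nonempty) : ℝ :=
  max (prefixBudget n ε B ρ (lastValid h)) (nextRatio h)

section SingleProfile

variable {n : ℕ} {ε : ℝ} {B ρ : Fin n → ℝ}

theorem wfun_pos (hε : 0 < ε) (ρ : Fin n → ℝ) (i : Fin n) : 0 < wfun n ε ρ i :=
  zpow_pos (by linarith) _

theorem wfun_le_wfun (hε : 0 < ε) {ρ ρ' : Fin n → ℝ} {i : Fin n} (h0 : 0 < ρ' i)
    (h : ρ' i ≤ ρ i) : wfun n ε ρ' i ≤ wfun n ε ρ i :=
  zpow_le_zpow_right₀ (by linarith) (Int.floor_mono (Real.logb_le_logb_of_le (by linarith) h0 h))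

theorem sortKey_injective : Function.Injective (sortKey n ε ρ) := fun i j h => by
  simpa [sortKey] using congrArg (fun x => (ofLex x).2) h

theorem wfun_le_wfun_of_sortKey_le {i j : Fin n} (h : sortKey n ε ρ i ≤ sortKey n ε ρ j) :
    wfun n ε ρ j ≤ wfun n ε ρ i := by
  rcases Prod.Lex.toLex_le_toLex.mp h with h | ⟨h, -⟩ <;> simp only [neg_lt_neg_iff, neg_inj] at h
  exacts [h.le, h.ge]

theorem strictMono_sortKey_sortPerm : StrictMono (sortKey n ε ρ ∘ sortPerm n ε ρ) :=
  (Tuple.monotone_sort (sortKey n ε ρ)).strictMono_of_injective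
    (sortKey_injective.comp (Equiv.injective _))

theorem sortKey_le_sortKey_iff {i j : Fin n} :
    sortKey n ε ρ i ≤ sortKey n ε ρ j ↔ (sortPerm n ε ρ).symm i ≤ (sortPerm n ε ρ).symm j := by
  simpa using strictMono_sortKey_sortPerm.le_iff_le (f := sortKey n ε ρ ∘ sortPerm n ε ρ)
    (a := (sortPerm n ε ρ).symm i) (b := (sortPerm n ε ρ).symm j)

theorem sortKey_lt_sortKey_iff {i j : Fin n} :
    sortKey n ε ρ i < sortKey n ε ρ j ↔ (sortPerm n ε ρ).symm i < (sortPerm n ε ρ).symm j := by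
  simpa using strictMono_sortKey_sortPerm.lt_iff_lt (f := sortKey n ε ρ ∘ sortPerm n ε ρ)
    (a := (sortPerm n ε ρ).symm i) (b := (sortPerm n ε ρ).symm j)

theorem bcum_eq_prefixBudget (t : Fin n) :
    bcum n ε B ρ t = prefixBudget n ε B ρ (sortPerm n ε ρ t) :=
  sum_equiv (sortPerm n ε ρ) (fun s => by simp [sortKey_le_sortKey_iff]) fun _ _ => rfl

theorem prefixBudget_nonneg (hB : ∀ i, 0 ≤ B i) (i : Fin n) : 0 ≤ prefixBudget n ε B ρ i :=
  sum_nonneg fun j _ => hB j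

theorem prefixBudget_pos (hB : ∀ i, 0 < B i) (i : Fin n) : 0 < prefixBudget n ε B ρ i :=
  sum_pos (fun j _ => hB j) ⟨i, by simp⟩

theorem prefixBudget_le_prefixBudget (hB : ∀ i, 0 ≤ B i) {ρ₁ ρ₂ : Fin n → ℝ} {i j : Fin n}
    (h : ∀ l, sortKey n ε ρ₁ l ≤ sortKey n ε ρ₁ i → sortKey n ε ρ₂ l ≤ sortKey n ε ρ₂ j) :
    prefixBudget n ε B ρ₁ i ≤ prefixBudget n ε B ρ₂ j :=
  sum_le_sum_of_subset_of_nonneg (fun l hl => by simpa using h l (by simpa using hl))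
    fun l _ _ => hB l

theorem prefixBudget_eq_add_of_isNext {m i : Fin n} (hi : IsNext n ε ρ m i) :
    prefixBudget n ε B ρ i = prefixBudget n ε B ρ m + B i := by
  have hset : univ.filter (fun l => sortKey n ε ρ l ≤ sortKey n ε ρ i) =
      insert i (univ.filter (fun l => sortKey n ε ρ l ≤ sortKey n ε ρ m)) := by
    ext l
    simp only [mem_filter, mem_univ, true_and, mem_insert]
    refine ⟨fun hl => or_iff_not_imp_right.mpr fun hlm => ?_, ?_⟩
    · exact sortKey_injective (le_antisymm hl (hi.2 l (lt_of_not_ge hlm)))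
    · rintro (rfl | hl)
      exacts [le_rfl, hl.trans hi.1.le]
  rw [prefixBudget, hset, sum_insert (by simpa using hi.1), add_comm]
  rfl

theorem mem_validSet_iff {t : Fin n} :
    t ∈ validSet n ε B ρ ↔
      prefixBudget n ε B ρ (sortPerm n ε ρ t) ≤ wfun n ε ρ (sortPerm n ε ρ t) := by
  simp [validSet, bcum_eq_prefixBudget]

section LastValid

variable (h : (validSet n ε B ρ).Nonempty)

theorem sortPerm_symm_lastValid :
    (sortPerm n ε ρ).symm (lastValid h) = (validSet n ε B ρ).max' h :=
  Equiv.symm_apply_apply _ _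

theorem prefixBudget_lastValid_le :
    prefixBudget n ε B ρ (lastValid h) ≤ wfun n ε ρ (lastValid h) :=
  mem_validSet_iff.mp (max'_mem _ h)

theorem wfun_lt_prefixBudget_of_lt {j : Fin n}
    (hj : sortKey n ε ρ (lastValid h) < sortKey n ε ρ j) :
    wfun n ε ρ j < prefixBudget n ε B ρ j := by
  rw [sortKey_lt_sortKey_iff, sortPerm_symm_lastValid] at hj
  have hnot : (sortPerm n ε ρ).symm j ∉ validSet n ε B ρ := fun hmem =>
    not_le.mpr hj (le_max' _ _ hmem)
  simpa [mem_validSet_iff] using hnot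

theorem sortKey_le_lastValid {i : Fin n}
    (hi : prefixBudget n ε B ρ i ≤ wfun n ε ρ i) :
    sortKey n ε ρ i ≤ sortKey n ε ρ (lastValid h) :=
  le_of_not_gt fun hlt => (wfun_lt_prefixBudget_of_lt h hlt).not_ge hi

theorem sortKey_le_lastValid_iff {i : Fin n} :
    sortKey n ε ρ i ≤ sortKey n ε ρ (lastValid h) ↔
      (sortPerm n ε ρ).symm i ≤ (validSet n ε B ρ).max' h := by
  rw [sortKey_le_sortKey_iff, sortPerm_symm_lastValid]

theorem isNext_lastValid_iff {i : Fin n} :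
    IsNext n ε ρ (lastValid h) i ↔
      ((sortPerm n ε ρ).symm i : ℕ) = ((validSet n ε B ρ).max' h : ℕ) + 1 := by
  simp only [IsNext, sortKey_lt_sortKey_iff, sortKey_le_sortKey_iff, sortPerm_symm_lastValid,
    Fin.lt_def, Fin.le_def]
  constructor
  · rintro ⟨hlt, hmin⟩
    have h2 : ((validSet n ε B ρ).max' h : ℕ) + 1 < n :=
      lt_of_le_of_lt hlt ((sortPerm n ε ρ).symm i).isLt
    have := hmin (sortPerm n ε ρ ⟨_, h2⟩) (by simp)
    simp only [Equiv.symm_apply_apply] at this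
    omega
  · intro hi
    exact ⟨by omega, fun j hj => by omega⟩

theorem wfun_le_nextRatio {j : Fin n}
    (hj : sortKey n ε ρ (lastValid h) < sortKey n ε ρ j) : wfun n ε ρ j ≤ nextRatio h := by
  rw [sortKey_lt_sortKey_iff, sortPerm_symm_lastValid, Fin.lt_def] at hj
  have h2 : ((validSet n ε B ρ).max' h : ℕ) + 1 < n := by
    have := ((sortPerm n ε ρ).symm j).isLt
    omega
  rw [nextRatio, dif_pos h2]
  refine wfun_le_wfun_of_sortKey_le ?_
  rw [sortKey_le_sortKey_iff, Equiv.symm_apply_apply, Fin.le_def]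
  exact hj

theorem nextRatio_le {c : ℝ} (hc : 0 ≤ c)
    (hj : ∀ j, sortKey n ε ρ (lastValid h) < sortKey n ε ρ j → wfun n ε ρ j ≤ c) :
    nextRatio h ≤ c := by
  unfold nextRatio
  split_ifs with h2
  · refine hj _ ?_
    rw [sortKey_lt_sortKey_iff, sortPerm_symm_lastValid, Equiv.symm_apply_apply, Fin.lt_def]
    simp
  · exact hc

theorem nextRatio_eq_of_isNext {i : Fin n} (hi : IsNext n ε ρ (lastValid h) i) :
    nextRatio h = wfun n ε ρ i := by
  have hpos := (isNext_lastValid_iff h).mp hi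
  have h2 : ((validSet n ε B ρ).max' h : ℕ) + 1 < n := hpos ▸ ((sortPerm n ε ρ).symm i).isLt
  have hi' : sortPerm n ε ρ ⟨_, h2⟩ = i := by
    rw [← Equiv.eq_symm_apply]
    exact Fin.ext hpos.symm
  rw [nextRatio, dif_pos h2, hi']

theorem clearingPrice_pos (hB : ∀ i, 0 < B i) : 0 < clearingPrice h :=
  (prefixBudget_pos hB _).trans_le (le_max_left _ _)

open Classical in
theorem mech_fst_eq (a : Fin n) :
    (mech n ε B ρ).1 a =
      if sortKey n ε ρ a ≤ sortKey n ε ρ (lastValid h) then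
        B a / ((1 + ε) * clearingPrice h)
      else if IsNext n ε ρ (lastValid h) a ∧
          prefixBudget n ε B ρ (lastValid h) ≤ nextRatio h then
        1 / (1 + ε) - prefixBudget n ε B ρ (lastValid h) / ((1 + ε) * nextRatio h)
      else 0 := by
  have hk : bcum n ε B ρ ((validSet n ε B ρ).max' h) = prefixBudget n ε B ρ (lastValid h) :=
    bcum_eq_prefixBudget _
  simp only [mech, dif_pos h, hk, ← nextRatio.eq_1, sortKey_le_lastValid_iff h,
    isNext_lastValid_iff h, clearingPrice]
  by_cases hp : nextRatio h < prefixBudget n ε B ρ (lastValid h)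
  · simp only [if_pos hp, max_eq_left hp.le]
    split_ifs with h2 h3
    exacts [rfl, absurd h3.2 hp.not_ge, rfl]
  · simp only [if_neg hp, max_eq_right (not_lt.mp hp), not_lt.mp hp, and_true]

theorem mech_fst_of_le {a : Fin n} (ha : sortKey n ε ρ a ≤ sortKey n ε ρ (lastValid h)) :
    (mech n ε B ρ).1 a = B a / ((1 + ε) * clearingPrice h) := by
  rw [mech_fst_eq h, if_pos ha]

theorem mech_fst_of_isNext {a : Fin n} (ha : IsNext n ε ρ (lastValid h) a)
    (hS : prefixBudget n ε B ρ (lastValid h) ≤ wfun n ε ρ a) :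
    (mech n ε B ρ).1 a =
      1 / (1 + ε) - prefixBudget n ε B ρ (lastValid h) / ((1 + ε) * wfun n ε ρ a) := by
  rw [mech_fst_eq h, if_neg (not_le.mpr ha.1), nextRatio_eq_of_isNext h ha, if_pos ⟨ha, hS⟩]

theorem mech_fst_of_not_isNext {a : Fin n}
    (ha : ¬sortKey n ε ρ a ≤ sortKey n ε ρ (lastValid h))
    (hn : ¬(IsNext n ε ρ (lastValid h) a ∧
      prefixBudget n ε B ρ (lastValid h) ≤ wfun n ε ρ a)) :
    (mech n ε B ρ).1 a = 0 := by
  rw [mech_fst_eq h, if_neg ha, if_neg]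
  rintro ⟨hi, hS⟩
  exact hn ⟨hi, nextRatio_eq_of_isNext h hi ▸ hS⟩

end LastValid

theorem mech_fst_nonneg (hε : 0 < ε) (hB : ∀ i, 0 < B i) (a : Fin n) :
    0 ≤ (mech n ε B ρ).1 a := by
  by_cases h : (validSet n ε B ρ).Nonempty
  swap
  · simp [mech, dif_neg h]
  have hε1 : 0 < 1 + ε := by linarith
  have hp := clearingPrice_pos h hB
  rw [mech_fst_eq h]
  split_ifs with htop hnext
  · exact div_nonneg (hB a).le (by positivity)
  · have hw := (prefixBudget_pos hB _).trans_le hnext.2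
    rw [sub_nonneg, div_le_div_iff₀ (by positivity) hε1]
    nlinarith
  · exact le_rfl

end SingleProfile

theorem leftover_le_share {ε S w b p : ℝ} (hε : 0 < 1 + ε) (hS : 0 ≤ S) (hb : 0 ≤ b)
    (hw : 0 < w) (hwS : w ≤ S + b) (hp : 0 < p) (hpS : p ≤ S + b) :
    1 / (1 + ε) - S / ((1 + ε) * w) ≤ b / ((1 + ε) * p) := by
  have hSb : S + b ≠ 0 := (hp.trans_le hpS).ne'
  have hshare : 1 - S / w ≤ b / p := calc
    1 - S / w ≤ 1 - S / (S + b) := by gcongr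
    _ = b / (S + b) := by field_simp; ring
    _ ≤ b / p := by gcongr
  calc 1 / (1 + ε) - S / ((1 + ε) * w) = (1 - S / w) / (1 + ε) := by field_simp
    _ ≤ (b / p) / (1 + ε) := by gcongr
    _ = b / ((1 + ε) * p) := by field_simp

structure UnilateralDecrease (n : ℕ) (ε : ℝ) (a : Fin n) (ρ ρ' : Fin n → ℝ) : Prop where
  eq_of_ne : ∀ i, i ≠ a → ρ' i = ρ i
  wfun_le_at : wfun n ε ρ' a ≤ wfun n ε ρ a

namespace UnilateralDecrease

variable {n : ℕ} {ε : ℝ} {B : Fin n → ℝ} {a : Fin n} {ρ ρ' : Fin n → ℝ}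

theorem wfun_eq (hd : UnilateralDecrease n ε a ρ ρ') {i : Fin n} (hi : i ≠ a) :
    wfun n ε ρ' i = wfun n ε ρ i := by
  rw [wfun, wfun, hd.eq_of_ne i hi]

theorem sortKey_eq (hd : UnilateralDecrease n ε a ρ ρ') {i : Fin n} (hi : i ≠ a) :
    sortKey n ε ρ' i = sortKey n ε ρ i := by
  rw [sortKey, sortKey, hd.wfun_eq hi]

theorem wfun_le (hd : UnilateralDecrease n ε a ρ ρ') (i : Fin n) :
    wfun n ε ρ' i ≤ wfun n ε ρ i := by
  rcases eq_or_ne i a with rfl | hi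
  exacts [hd.wfun_le_at, (hd.wfun_eq hi).le]

theorem sortKey_le (hd : UnilateralDecrease n ε a ρ ρ') (i : Fin n) :
    sortKey n ε ρ i ≤ sortKey n ε ρ' i :=
  Prod.Lex.toLex_mono ⟨neg_le_neg (hd.wfun_le i), le_rfl⟩

theorem sortKey_le_of_sortKey_le (hd : UnilateralDecrease n ε a ρ ρ') {i : Fin n}
    (h : sortKey n ε ρ' a ≤ sortKey n ε ρ' i) : sortKey n ε ρ a ≤ sortKey n ε ρ i := by
  rcases eq_or_ne i a with rfl | hi
  exacts [le_rfl, (hd.sortKey_le a).trans (h.trans (hd.sortKey_eq hi).le)]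

theorem prefixBudget_le (hd : UnilateralDecrease n ε a ρ ρ') (hB : ∀ i, 0 ≤ B i)
    {i j : Fin n} (hij : sortKey n ε ρ i ≤ sortKey n ε ρ' j)
    (ha : sortKey n ε ρ a ≤ sortKey n ε ρ i → sortKey n ε ρ' a ≤ sortKey n ε ρ' j) :
    prefixBudget n ε B ρ i ≤ prefixBudget n ε B ρ' j :=
  prefixBudget_le_prefixBudget hB fun l hl => by
    rcases eq_or_ne l a with rfl | hl'
    exacts [ha hl, (hd.sortKey_eq hl').le.trans (hl.trans hij)]

theorem prefixBudget_le_of_ne (hd : UnilateralDecrease n ε a ρ ρ') (hB : ∀ i, 0 ≤ B i)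
    {i : Fin n} (hi : i ≠ a) : prefixBudget n ε B ρ' i ≤ prefixBudget n ε B ρ i :=
  prefixBudget_le_prefixBudget hB fun l hl => by
    rw [← hd.sortKey_eq hi]
    rcases eq_or_ne l a with rfl | hl'
    exacts [(hd.sortKey_le l).trans hl, (hd.sortKey_eq hl').ge.trans hl]

section LastValid

variable (h : (validSet n ε B ρ).Nonempty) (h' : (validSet n ε B ρ').Nonempty)

theorem sortKey_le_lastValid_of_valid (hd : UnilateralDecrease n ε a ρ ρ') (hB : ∀ i, 0 ≤ B i)
    {i : Fin n} (hi : i ≠ a) (hvalid : prefixBudget n ε B ρ i ≤ wfun n ε ρ i) :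
    sortKey n ε ρ i ≤ sortKey n ε ρ' (lastValid h') := by
  rw [← hd.sortKey_eq hi]
  refine sortKey_le_lastValid h' ?_
  calc prefixBudget n ε B ρ' i ≤ prefixBudget n ε B ρ i := hd.prefixBudget_le_of_ne hB hi
    _ ≤ wfun n ε ρ i := hvalid
    _ = wfun n ε ρ' i := (hd.wfun_eq hi).symm

theorem sortKey_lastValid_le (hd : UnilateralDecrease n ε a ρ ρ') (hB : ∀ i, 0 ≤ B i)
    {j : Fin n} (haj : sortKey n ε ρ' a ≤ sortKey n ε ρ' j)
    (hj : sortKey n ε ρ' (lastValid h') ≤ sortKey n ε ρ' j) :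
    sortKey n ε ρ (lastValid h) ≤ sortKey n ε ρ' j := by
  rcases eq_or_ne (lastValid h) a with hm | hm
  · rw [hm]
    exact (hd.sortKey_le a).trans haj
  · exact (hd.sortKey_le_lastValid_of_valid h' hB hm (prefixBudget_lastValid_le h)).trans hj

theorem sortKey_le_lastValid_of_le (hd : UnilateralDecrease n ε a ρ ρ') (hB : ∀ i, 0 ≤ B i)
    (hA : sortKey n ε ρ' a ≤ sortKey n ε ρ' (lastValid h')) :
    sortKey n ε ρ a ≤ sortKey n ε ρ (lastValid h) := by
  have hvalid : prefixBudget n ε B ρ (lastValid h') ≤ wfun n ε ρ (lastValid h') := calc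
    prefixBudget n ε B ρ (lastValid h') ≤ prefixBudget n ε B ρ' (lastValid h') :=
      hd.prefixBudget_le hB (hd.sortKey_le _) fun _ => hA
    _ ≤ wfun n ε ρ' (lastValid h') := prefixBudget_lastValid_le h'
    _ ≤ wfun n ε ρ (lastValid h') := hd.wfun_le _
  exact (hd.sortKey_le_of_sortKey_le hA).trans (sortKey_le_lastValid h hvalid)

theorem clearingPrice_le (hd : UnilateralDecrease n ε a ρ ρ') (hB : ∀ i, 0 ≤ B i)
    (hA : sortKey n ε ρ' a ≤ sortKey n ε ρ' (lastValid h')) :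
    clearingPrice h ≤ clearingPrice h' := by
  have hS : prefixBudget n ε B ρ (lastValid h) ≤ prefixBudget n ε B ρ' (lastValid h') :=
    hd.prefixBudget_le hB (hd.sortKey_lastValid_le h h' hB hA le_rfl) fun _ => hA
  refine max_le (hS.trans (le_max_left _ _))
    (nextRatio_le h ((prefixBudget_nonneg hB _).trans (le_max_left _ _)) fun j hj => ?_)
  have hja : j ≠ a := by
    rintro rfl
    exact not_le.mpr hj (hd.sortKey_le_lastValid_of_le h h' hB hA)
  rcases le_or_gt (sortKey n ε ρ' j) (sortKey n ε ρ' (lastValid h')) with hj' | hj'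
  · calc wfun n ε ρ j ≤ prefixBudget n ε B ρ j := (wfun_lt_prefixBudget_of_lt h hj).le
      _ ≤ prefixBudget n ε B ρ' (lastValid h') :=
        hd.prefixBudget_le hB ((hd.sortKey_eq hja).ge.trans hj') fun _ => hA
      _ ≤ clearingPrice h' := le_max_left _ _
  · calc wfun n ε ρ j = wfun n ε ρ' j := (hd.wfun_eq hja).symm
      _ ≤ nextRatio h' := wfun_le_nextRatio h' hj'
      _ ≤ clearingPrice h' := le_max_right _ _

theorem clearingPrice_le_prefixBudget (hd : UnilateralDecrease n ε a ρ ρ') (hB : ∀ i, 0 ≤ B i)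
    (hnext : IsNext n ε ρ' (lastValid h') a)
    (hA : sortKey n ε ρ a ≤ sortKey n ε ρ (lastValid h)) :
    clearingPrice h ≤ prefixBudget n ε B ρ' a := by
  have hm := hd.sortKey_lastValid_le h h' hB le_rfl hnext.1.le
  refine max_le (hd.prefixBudget_le hB hm fun _ => le_rfl)
    (nextRatio_le h (prefixBudget_nonneg hB _) fun j hj => ?_)
  have hja : j ≠ a := by
    rintro rfl
    exact not_le.mpr hj hA
  rcases le_or_gt (sortKey n ε ρ' j) (sortKey n ε ρ' (lastValid h')) with hj' | hj'
  · calc wfun n ε ρ j ≤ prefixBudget n ε B ρ j := (wfun_lt_prefixBudget_of_lt h hj).le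
      _ ≤ prefixBudget n ε B ρ' a :=
        hd.prefixBudget_le hB ((hd.sortKey_eq hja).ge.trans (hj'.trans hnext.1.le)) fun _ => le_rfl
  · calc wfun n ε ρ j = wfun n ε ρ' j := (hd.wfun_eq hja).symm
      _ ≤ wfun n ε ρ' a := wfun_le_wfun_of_sortKey_le (hnext.2 j hj')
      _ ≤ prefixBudget n ε B ρ' a := (wfun_lt_prefixBudget_of_lt h' hnext.1).le

theorem prefixBudget_lastValid_le_of_lt (hd : UnilateralDecrease n ε a ρ ρ') (hB : ∀ i, 0 ≤ B i)
    (hA : sortKey n ε ρ (lastValid h) < sortKey n ε ρ a) :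
    prefixBudget n ε B ρ (lastValid h) ≤ prefixBudget n ε B ρ' (lastValid h') :=
  hd.prefixBudget_le hB
    (hd.sortKey_le_lastValid_of_valid h' hB (ne_of_apply_ne _ hA.ne) (prefixBudget_lastValid_le h))
    fun ha => absurd ha (not_le.mpr hA)

theorem isNext_of_isNext (hd : UnilateralDecrease n ε a ρ ρ') (hB : ∀ i, 0 ≤ B i)
    (hnext : IsNext n ε ρ' (lastValid h') a)
    (hS : prefixBudget n ε B ρ' (lastValid h') ≤ wfun n ε ρ' a)
    (hA : sortKey n ε ρ (lastValid h) < sortKey n ε ρ a) :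
    IsNext n ε ρ (lastValid h) a := by
  -- An agent `j` strictly between the last valid agent and `a` would, under `ρ'`, sit before the
  -- new last valid agent; then its prefix budget is at most `B'[k'] ≤ w'_a ≤ w_a ≤ w_j`.
  refine ⟨hA, fun j hj => le_of_not_gt fun hja => ?_⟩
  have hne : j ≠ a := ne_of_apply_ne _ hja.ne
  have hj' : sortKey n ε ρ' j ≤ sortKey n ε ρ' (lastValid h') := le_of_not_gt fun hlt =>
    not_le.mpr ((hd.sortKey_eq hne).trans_lt (hja.trans_le (hd.sortKey_le a))) (hnext.2 j hlt)
  have hle : prefixBudget n ε B ρ j ≤ wfun n ε ρ j := calc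
    prefixBudget n ε B ρ j ≤ prefixBudget n ε B ρ' (lastValid h') :=
      hd.prefixBudget_le hB ((hd.sortKey_eq hne).ge.trans hj') fun ha => absurd ha (not_le.mpr hja)
    _ ≤ wfun n ε ρ' a := hS
    _ ≤ wfun n ε ρ a := hd.wfun_le_at
    _ ≤ wfun n ε ρ j := wfun_le_wfun_of_sortKey_le hja.le
  exact not_le.mpr (wfun_lt_prefixBudget_of_lt h hj) hle

end LastValid

end UnilateralDecrease

theorem stmt_12_general (n : ℕ) (ε : ℝ) (hε : 0 < ε) (B ρ ρ' : Fin n → ℝ) (a : Fin n)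
    (hB : ∀ i, 0 < B i) (hρ' : ∀ i, 0 < ρ' i)
    (hother : ∀ i, i ≠ a → ρ' i = ρ i) (hdec : ρ' a ≤ ρ a)
    (hval : (validSet n ε B ρ).Nonempty) (hval' : (validSet n ε B ρ').Nonempty) :
    (mech n ε B ρ').1 a ≤ (mech n ε B ρ).1 a := by
  have hd : UnilateralDecrease n ε a ρ ρ' := ⟨hother, wfun_le_wfun hε (hρ' a) hdec⟩
  have hB0 : ∀ i, 0 ≤ B i := fun i => (hB i).le
  have hε1 : 0 < 1 + ε := by linarith
  by_cases hA' : sortKey n ε ρ' a ≤ sortKey n ε ρ' (lastValid hval')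
  · rw [mech_fst_of_le hval' hA',
      mech_fst_of_le hval (hd.sortKey_le_lastValid_of_le hval hval' hB0 hA')]
    exact div_le_div_of_nonneg_left (hB0 a) (mul_pos hε1 (clearingPrice_pos hval hB))
      (mul_le_mul_of_nonneg_left (hd.clearingPrice_le hval hval' hB0 hA') hε1.le)
  by_cases hwin : IsNext n ε ρ' (lastValid hval') a ∧
      prefixBudget n ε B ρ' (lastValid hval') ≤ wfun n ε ρ' a
  swap
  · rw [mech_fst_of_not_isNext hval' hA' hwin]
    exact mech_fst_nonneg hε hB a
  obtain ⟨hnext, hS'⟩ := hwin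
  have hsplit := prefixBudget_eq_add_of_isNext (B := B) hnext
  rw [mech_fst_of_isNext hval' hnext hS']
  by_cases hA : sortKey n ε ρ a ≤ sortKey n ε ρ (lastValid hval)
  · rw [mech_fst_of_le hval hA]
    refine leftover_le_share hε1 (prefixBudget_nonneg hB0 _) (hB0 a) (wfun_pos hε _ _) ?_
      (clearingPrice_pos hval hB) ?_
    · exact hsplit ▸ (wfun_lt_prefixBudget_of_lt hval' hnext.1).le
    · exact hsplit ▸ hd.clearingPrice_le_prefixBudget hval hval' hB0 hnext hA
  · have hlt := lt_of_not_ge hA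
    have hS := hd.prefixBudget_lastValid_le_of_lt hval hval' hB0 hlt
    rw [mech_fst_of_isNext hval (hd.isNext_of_isNext hval hval' hB0 hnext hS' hlt)
      (hS.trans (hS'.trans hd.wfun_le_at))]
    exact sub_le_sub_left (div_le_div₀ (prefixBudget_nonneg hB0 _) hS
      (mul_pos hε1 (wfun_pos hε ρ' a)) (mul_le_mul_of_nonneg_left hd.wfun_le_at hε1.le)) _

/-- Monotonicity of Algorithm 6's allocation: for a fixed agent `a` and fixed reports
of the other agents, the fraction allocated to `a` is non-increasing as her reported
ratio `v a / τ a` decreases (both reports being in the algorithm's domain, i.e. a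
maximal valid index exists in both runs). -/
theorem stmt_12 (n : ℕ) (ε : ℝ) (hε : 0 < ε) (B ρ ρ' : Fin n → ℝ) (a : Fin n)
    (hB : ∀ i, 0 < B i) (hρ : ∀ i, 0 < ρ i) (hρ' : ∀ i, 0 < ρ' i)
    (hother : ∀ i, i ≠ a → ρ' i = ρ i) (hdec : ρ' a ≤ ρ a)
    (hval : (validSet n ε B ρ).Nonempty) (hval' : (validSet n ε B ρ').Nonempty) :
    (mech n ε B ρ').1 a ≤ (mech n ε B ρ).1 a :=
  stmt_12_general n ε hε B ρ ρ' a hB hρ' hother hdec hval hval'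
end

section
/- In Algorithm 7, for every agent i, the final payment p_i satisfies p_i ≥ min{1/2, 1/(1+ε)} · Σ_j z_{ij}·p_i(z_j), where p_i(z_j) is agent i's payment in the single-item auction for item j. -/
/-!
Fix an agent and let `a = z_g` be its smallest positive allocation. The budget part is immediate:
`Σ z_j q_j ≤ Σ q_j ≤ Σ B_j = B`. For the RoS part, every item with positive allocation lies in
the upper level set `T(g)`, so it suffices to bound each `z_j q_j` by `K v_j` with
`K · Σ_{T(g)} v = C · U(g) / τ ≤ C · U(h) / τ`:
* if `a ≥ 1/2`, the per-item RoS constraint gives `z_j q_j ≤ v_j / τ ≤ 2a v_j / τ` (`C = 2`);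
* if `a < 1/2`, agent `i` survived the clipping in item `g`, so `q_g ≥ B_g / (1+ε)`; combined with
  `q_g ≤ v_g a / τ` and proportional sub-budgets this caps the budget rate, `B / Σ v ≤ (1+ε) a / τ`,
  hence `z_j q_j ≤ B_j ≤ (1+ε) a v_j / τ` (`C = 1+ε`).
-/

open Finset

theorem mul_le_of_half_le_of_ros {z q v τ a : ℝ} (hτ : 0 < τ) (ha : 1 / 2 ≤ a) (hz1 : z ≤ 1)
    (hv : 0 ≤ v) (hq0 : 0 ≤ q) (hros : τ * q ≤ v * z) : z * q ≤ 2 * a / τ * v := by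
  rw [div_mul_eq_mul_div, le_div_iff₀ hτ]
  nlinarith [mul_le_of_le_one_left hq0 hz1, mul_le_of_le_one_right hv hz1]

theorem budget_rate_le_of_clip {B V vg qg a τ ε : ℝ} (hτ : 0 < τ) (hε : 0 < 1 + ε)
    (hvg : 0 < vg) (hclip : B * vg / V / (1 + ε) ≤ qg) (hros : τ * qg ≤ vg * a) :
    B / V ≤ (1 + ε) * a / τ := by
  have hq : qg ≤ vg * a / τ := (le_div_iff₀ hτ).2 (by linarith [mul_comm τ qg])
  refine le_of_mul_le_mul_right ?_ hvg
  calc B / V * vg = B * vg / V := by ring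
    _ ≤ qg * (1 + ε) := (div_le_iff₀ hε).1 hclip
    _ ≤ vg * a / τ * (1 + ε) := by gcongr
    _ = (1 + ε) * a / τ * vg := by ring

section SingleAgent

variable {ι : Type*} [Fintype ι] {z q v : ι → ℝ}

theorem sum_proportional_share (B : ℝ) (hv : ∑ j, v j ≠ 0) :
    ∑ j, B * v j / ∑ j', v j' = B := by
  rw [← sum_div, ← mul_sum, mul_div_assoc, div_self hv, mul_one]

theorem sum_mul_le_of_le_proportional_share {B : ℝ} (hv : ∑ j, v j ≠ 0)
    (hz1 : ∀ j, z j ≤ 1) (hq0 : ∀ j, 0 ≤ q j) (hqB : ∀ j, q j ≤ B * v j / ∑ j', v j') :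
    ∑ j, z j * q j ≤ B :=
  calc ∑ j, z j * q j ≤ ∑ j, B * v j / ∑ j', v j' :=
        sum_le_sum fun j _ => (mul_le_of_le_one_left (hq0 j) (hz1 j)).trans (hqB j)
    _ = B := sum_proportional_share B hv

theorem sum_mul_le_mul_sum_upperLevel {g : ι} {K : ℝ} (hz0 : ∀ j, 0 ≤ z j) (hg0 : 0 < z g)
    (hg : ∀ j, 0 < z j → z g ≤ z j) (hK : ∀ j, 0 < z j → z j * q j ≤ K * v j) :
    ∑ j, z j * q j ≤ K * ∑ j ∈ univ.filter (fun j => z g ≤ z j), v j := by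
  have hpos : ∀ j, z j * q j ≠ 0 → 0 < z j := fun j hj =>
    (hz0 j).lt_of_ne' (left_ne_zero_of_mul hj)
  rw [← sum_filter_of_ne fun j _ hj => hg j (hpos j hj), mul_sum]
  exact sum_le_sum fun j hj => hK j (hg0.trans_le (mem_filter.1 hj).2)

theorem min_mul_sum_le_upperValue_div {ε τ B : ℝ} {g : ι} (hε : 0 < 1 + ε) (hτ : 0 < τ)
    (hv : ∀ j, 0 < v j) (hz0 : ∀ j, 0 ≤ z j) (hz1 : ∀ j, z j ≤ 1) (hq0 : ∀ j, 0 ≤ q j)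
    (hqB : ∀ j, q j ≤ B * v j / ∑ j', v j') (hros : ∀ j, τ * q j ≤ v j * z j)
    (hg : ∀ j, 0 < z j → 0 < z g ∧ z g ≤ z j)
    (hclip : 0 < z g → z g < 1 / 2 → (B * v g / ∑ j', v j') / (1 + ε) ≤ q g) :
    min (1 / 2) (1 / (1 + ε)) * ∑ j, z j * q j ≤
      z g * (∑ j ∈ univ.filter (fun j => z g ≤ z j), v j) / τ := by
  set V := ∑ j ∈ univ.filter (fun j => z g ≤ z j), v j
  have hS0 : 0 ≤ ∑ j, z j * q j := sum_nonneg fun j _ => mul_nonneg (hz0 j) (hq0 j)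
  by_cases hg0 : 0 < z g
  swap
  · have hS : ∑ j, z j * q j = 0 :=
      sum_eq_zero fun j _ => by
        rw [le_antisymm (not_lt.1 fun hj => hg0 (hg j hj).1) (hz0 j), zero_mul]
    rw [hS, mul_zero]
    exact div_nonneg (mul_nonneg (hz0 g) (sum_nonneg fun j _ => (hv j).le)) hτ.le
  rcases le_or_gt (1 / 2) (z g) with ha | ha
  · have hS : ∑ j, z j * q j ≤ 2 * z g / τ * V :=
      sum_mul_le_mul_sum_upperLevel hz0 hg0 (fun j hj => (hg j hj).2) fun j _ =>
        mul_le_of_half_le_of_ros hτ ha (hz1 j) (hv j).le (hq0 j) (hros j)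
    calc min (1 / 2) (1 / (1 + ε)) * ∑ j, z j * q j ≤ 1 / 2 * ∑ j, z j * q j := by
          gcongr; exact min_le_left _ _
      _ ≤ 1 / 2 * (2 * z g / τ * V) := by gcongr
      _ = z g * V / τ := by ring
  · have hrate : B / ∑ j', v j' ≤ (1 + ε) * z g / τ :=
      budget_rate_le_of_clip hτ hε (hv g) (hclip hg0 ha) (hros g)
    have hS : ∑ j, z j * q j ≤ (1 + ε) * z g / τ * V :=
      sum_mul_le_mul_sum_upperLevel hz0 hg0 (fun j hj => (hg j hj).2) fun j _ =>
        calc z j * q j ≤ q j := mul_le_of_le_one_left (hq0 j) (hz1 j)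
          _ ≤ B / (∑ j', v j') * v j := (hqB j).trans_eq (by ring)
          _ ≤ (1 + ε) * z g / τ * v j := by gcongr; exact (hv j).le
    calc min (1 / 2) (1 / (1 + ε)) * ∑ j, z j * q j ≤ 1 / (1 + ε) * ∑ j, z j * q j := by
          gcongr; exact min_le_right _ _
      _ ≤ 1 / (1 + ε) * ((1 + ε) * z g / τ * V) := by gcongr
      _ = z g * V / τ := by field_simp

end SingleAgent

theorem stmt_17_general (n m : ℕ) (ε : ℝ) (hε : 0 < ε)
    (v : Fin n → Fin m → ℝ) (B τ : Fin n → ℝ)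
    (hv : ∀ i j, 0 < v i j) (hτ : ∀ i, 0 < τ i)
    (Bij : Fin n → Fin m → ℝ)
    (hBij : ∀ i j, Bij i j = B i * v i j / ∑ j', v i j')
    (z : Fin n → Fin m → ℝ)
    (hz0 : ∀ i j, 0 ≤ z i j) (hzle : ∀ i j, z i j ≤ 1)
    (q : Fin n → Fin m → ℝ)
    (hq0 : ∀ i j, 0 ≤ q i j)
    (hqB : ∀ i j, q i j ≤ Bij i j)
    (hqRoS : ∀ i j, τ i * q i j ≤ v i j * z i j)
    (g : Fin n → Fin m)
    (hg : ∀ i j, 0 < z i j → 0 < z i (g i) ∧ z i (g i) ≤ z i j)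
    (hclip : ∀ i, 0 < z i (g i) → z i (g i) < 1 / 2 →
      Bij i (g i) / (1 + ε) ≤ q i (g i))
    (T : Fin n → Fin m → Finset (Fin m))
    (hT : ∀ i j, T i j = Finset.univ.filter (fun j' => z i j ≤ z i j'))
    (U : Fin n → Fin m → ℝ)
    (hU : ∀ i j, U i j = z i j * ∑ j' ∈ T i j, v i j')
    (h : Fin n → Fin m) (hh : ∀ i j, U i j ≤ U i (h i))
    (p : Fin n → ℝ) (hp : ∀ i, p i = min (B i) (U i (h i) / τ i)) :
    ∀ i, min (1 / 2) (1 / (1 + ε)) * ∑ j, z i j * q i j ≤ p i := by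
  intro i
  have hqB' : ∀ j, q i j ≤ B i * v i j / ∑ j', v i j' := fun j => (hqB i j).trans_eq (hBij i j)
  have hsum : ∑ j, v i j ≠ 0 := (sum_pos (fun j _ => hv i j) ⟨g i, mem_univ _⟩).ne'
  have hS0 : 0 ≤ ∑ j, z i j * q i j := sum_nonneg fun j _ => mul_nonneg (hz0 i j) (hq0 i j)
  have hc1 : min (1 / 2 : ℝ) (1 / (1 + ε)) ≤ 1 := (min_le_left _ _).trans (by norm_num)
  rw [hp]
  refine le_min ?_ ?_
  · exact (mul_le_of_le_one_left hS0 hc1).trans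
      (sum_mul_le_of_le_proportional_share hsum (hzle i) (hq0 i) hqB')
  · calc _ ≤ U i (g i) / τ i := by
          rw [hU, hT]
          exact min_mul_sum_le_upperValue_div (ε := ε) (by linarith) (hτ i) (hv i) (hz0 i) (hzle i)
            (hq0 i) hqB' (hqRoS i) (hg i) fun h0 h1 => hBij i (g i) ▸ hclip i h0 h1
      _ ≤ U i (h i) / τ i := div_le_div_of_nonneg_right (hh i (g i)) (hτ i).le

/-- In Algorithm 7, with per-item single-item-auction allocations `z` and payments
`q i j = p_i(z_j)` satisfying `q i j ≤ Bij i j` and the per-item RoS constraint,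
where `g i` is the item with minimum positive allocation of agent `i` and the supply
clipping guarantees `q i (g i) ≥ Bij i (g i)/(1+ε)` whenever `0 < z i (g i) < 1/2`,
the final payment `p i = min (B i) (U i (h i)/τ i)` satisfies
`p i ≥ min (1/2) (1/(1+ε)) * Σ_j z i j * q i j`. -/
theorem stmt_17 (n m : ℕ) (ε : ℝ) (hε : 0 < ε)
    (v : Fin n → Fin m → ℝ) (B τ : Fin n → ℝ)
    (hv : ∀ i j, 0 < v i j) (hB : ∀ i, 0 < B i) (hτ : ∀ i, 0 < τ i)
    (Bij : Fin n → Fin m → ℝ)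
    (hBij : ∀ i j, Bij i j = B i * v i j / ∑ j', v i j')
    (z : Fin n → Fin m → ℝ)
    (hz0 : ∀ i j, 0 ≤ z i j) (hz1 : ∀ j, ∑ i, z i j ≤ 1) (hzle : ∀ i j, z i j ≤ 1)
    (q : Fin n → Fin m → ℝ)
    (hq0 : ∀ i j, 0 ≤ q i j)
    (hqB : ∀ i j, q i j ≤ Bij i j)
    (hqRoS : ∀ i j, τ i * q i j ≤ v i j * z i j)
    (g : Fin n → Fin m)
    (hg : ∀ i j, 0 < z i j → 0 < z i (g i) ∧ z i (g i) ≤ z i j)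
    (hclip : ∀ i, 0 < z i (g i) → z i (g i) < 1 / 2 →
      Bij i (g i) / (1 + ε) ≤ q i (g i))
    (T : Fin n → Fin m → Finset (Fin m))
    (hT : ∀ i j, T i j = Finset.univ.filter (fun j' => z i j ≤ z i j'))
    (U : Fin n → Fin m → ℝ)
    (hU : ∀ i j, U i j = z i j * ∑ j' ∈ T i j, v i j')
    (h : Fin n → Fin m) (hh : ∀ i j, U i j ≤ U i (h i))
    (p : Fin n → ℝ) (hp : ∀ i, p i = min (B i) (U i (h i) / τ i)) :
    ∀ i, min (1 / 2) (1 / (1 + ε)) * ∑ j, z i j * q i j ≤ p i :=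
  stmt_17_general n m ε hε v B τ hv hτ Bij hBij z hz0 hzle q hq0 hqB hqRoS g hg hclip T hT U hU h hh
    p hp
end
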